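/- arXiv:0902.3953 — 4 statements merged into one kernel-verified Lean document; each statement's English description precedes it below -/
import Mathlib

section
/- Let q ≥ 4 be even, a_0 ∈ ℤ, and let a_1, …, a_n be nonzero integers such that the finite sequence (a_1, …, a_n, 1, 1, …, 1) with h_q trailing entries 1 is q-regular. Then a_n ≠ 1, the finite sequence (a_1, …, a_{n−1}, a_n − 1, −1, …, −1) with h_q trailing entries −1 is also q-regular, the last denominators of both finite continued fractions are nonzero, and the values coincide: [a_0; a_1, …, a_n, (1)^{h_q}] = [a_0; a_1, …, a_{n−1}, a_n − 1, (−1)^{h_q}]. -/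
open Filter Topology

/-- `λ_q = 2 cos (π/q)`. -/
noncomputable def lamq (q : ℕ) : ℝ := 2 * Real.cos (Real.pi / q)

/-- `h_q = (q-2)/2` for even `q` and `(q-3)/2` for odd `q`. -/
def hQ (q : ℕ) : ℕ := if Even q then (q - 2) / 2 else (q - 3) / 2

/-- Forbidden blocks for the nearest `λ_q`-multiple continued fractions.
For `ε ∈ {1,-1}`: the block `(ε)^{h_q+1}`; for even `q` the blocks `((ε)^{h_q}, ε·m)`, `m ≥ 1`;
for odd `q` (including `q = 3`, where `h_q = 0`) the blocks `((ε)^{h_q}, ε·2, (ε)^{h_q}, ε·m)`,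
`m ≥ 1`. -/
def IsForbidden (q : ℕ) (L : List ℤ) : Prop :=
  ∃ ε : ℤ, (ε = 1 ∨ ε = -1) ∧
    (L = List.replicate (hQ q + 1) ε ∨
      (if Even q then
        ∃ m : ℤ, 1 ≤ m ∧ L = List.replicate (hQ q) ε ++ [ε * m]
      else
        ∃ m : ℤ, 1 ≤ m ∧
          L = List.replicate (hQ q) ε ++ ε * 2 :: (List.replicate (hQ q) ε ++ [ε * m])))

/-- An infinite sequence is `q`-regular if no finite subblock is forbidden. -/
def RegularSeq (q : ℕ) (a : ℕ → ℤ) : Prop :=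
  ∀ (l len : ℕ), ¬ IsForbidden q (List.ofFn fun j : Fin len => a (l + (j : ℕ)))

/-- An infinite sequence is dual `q`-regular if no reversed finite subblock is forbidden. -/
def DualRegularSeq (q : ℕ) (a : ℕ → ℤ) : Prop :=
  ∀ (l len : ℕ), ¬ IsForbidden q (List.ofFn fun j : Fin len => a (l + (j : ℕ))).reverse

/-- A finite sequence is `q`-regular if no contiguous subblock is forbidden. -/
def RegularList (q : ℕ) (L : List ℤ) : Prop :=
  ∀ B : List ℤ, B <:+: L → ¬ IsForbidden q B

/-- Numerators of the convergents: `p₀ = a₀λ`, `p₁ = a₁λ·p₀ - 1`,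
`pₙ = aₙλ·pₙ₋₁ - pₙ₋₂` (so that `p₋₁ = 1`, `p₋₂ = 0`).  Here `A n` is the digit `aₙ`. -/
noncomputable def cfP (lam : ℝ) (A : ℕ → ℤ) : ℕ → ℝ
  | 0 => (A 0 : ℝ) * lam
  | 1 => (A 1 : ℝ) * lam * ((A 0 : ℝ) * lam) - 1
  | (n + 2) => (A (n + 2) : ℝ) * lam * cfP lam A (n + 1) - cfP lam A n

/-- Denominators of the convergents: `q₀ = 1`, `q₁ = a₁λ`,
`qₙ = aₙλ·qₙ₋₁ - qₙ₋₂` (so that `q₋₁ = 0`, `q₋₂ = -1`). -/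
noncomputable def cfQ (lam : ℝ) (A : ℕ → ℤ) : ℕ → ℝ
  | 0 => 1
  | 1 => (A 1 : ℝ) * lam
  | (n + 2) => (A (n + 2) : ℝ) * lam * cfQ lam A (n + 1) - cfQ lam A n

/-- The λ-continued fraction with digit sequence `A` converges to `x`. -/
def CFConvergesTo (lam : ℝ) (A : ℕ → ℤ) (x : ℝ) : Prop :=
  (∀ n, cfQ lam A n ≠ 0) ∧
    Filter.Tendsto (fun n => cfP lam A n / cfQ lam A n) Filter.atTop (nhds x)

/-- The value `p_L/q_L` of the finite continued fraction `[a₀; a₁, …, a_L]`. -/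
noncomputable def cfValList (lam : ℝ) (a0 : ℤ) (L : List ℤ) : ℝ :=
  cfP lam (fun i => (a0 :: L).getD i 0) L.length /
    cfQ lam (fun i => (a0 :: L).getD i 0) L.length

/-- The last denominator `q_L` of the finite continued fraction `[a₀; a₁, …, a_L]`. -/
noncomputable def cfDenList (lam : ℝ) (a0 : ℤ) (L : List ℤ) : ℝ :=
  cfQ lam (fun i => (a0 :: L).getD i 0) L.length

/-- The modified floor: `⌊t⌋* = ⌈t⌉ - 1` for `t > 0` and `⌊t⌋* = ⌊t⌋` for `t ≤ 0`. -/
noncomputable def floorstar (t : ℝ) : ℤ := if 0 < t then ⌈t⌉ - 1 else ⌊t⌋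

/-- The nearest `λ`-multiple: `⟨y⟩ = ⌊y/λ + 1/2⌋*`. -/
noncomputable def nearestLam (lam : ℝ) (x : ℝ) : ℤ := floorstar (x / lam + 1 / 2)

/-- The interval map `f_q` on `I_q = [-λ/2, λ/2]`. -/
noncomputable def fq (lam : ℝ) (x : ℝ) : ℝ :=
  if x = 0 then 0 else -1 / x - (nearestLam lam (-1 / x) : ℝ) * lam

/-- `R_q`: equal to `1` for even `q`, and the positive root of `R² + (2-λ_q)R = 1` for odd `q`. -/
noncomputable def Rq (q : ℕ) : ℝ :=
  if Even q then 1 else (lamq q - 2 + Real.sqrt ((2 - lamq q) ^ 2 + 4)) / 2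

/-- `r_q = R_q - λ_q`. -/
noncomputable def rq (q : ℕ) : ℝ := Rq q - lamq q

/-- The map `⟨·⟩*` used by the dual algorithm. -/
noncomputable def nearestDual (lam R y : ℝ) : ℤ :=
  if 0 ≤ y then floorstar (y / lam + 1 - R / lam) else floorstar (y / lam + R / lam)

/-- The dual interval map `f_q^*` on `I_{R_q} = [-R_q, R_q]`. -/
noncomputable def fqstar (lam R : ℝ) (x : ℝ) : ℝ :=
  if x = 0 then 0 else -1 / x - (nearestDual lam R (-1 / x) : ℝ) * lam

/-- The matrix `S = [[0,-1],[1,0]]` as an element of `SL(2,ℝ)`. -/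
noncomputable def matS : Matrix.SpecialLinearGroup (Fin 2) ℝ :=
  ⟨!![0, -1; 1, 0], by norm_num [Matrix.det_fin_two_of]⟩

/-- The matrix `T = [[1,λ],[0,1]]` as an element of `SL(2,ℝ)`. -/
noncomputable def matT (lam : ℝ) : Matrix.SpecialLinearGroup (Fin 2) ℝ :=
  ⟨!![1, lam; 0, 1], by norm_num [Matrix.det_fin_two_of]⟩

/-- The Hecke triangle group `G_q`, the subgroup of `SL(2,ℝ)` generated by `S` and `T_q`. -/
noncomputable def Hecke (q : ℕ) : Subgroup (Matrix.SpecialLinearGroup (Fin 2) ℝ) :=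
  Subgroup.closure {matS, matT (lamq q)}

/-- The Möbius action of `g` on `x ∈ ℝ`. -/
noncomputable def moeb (g : Matrix.SpecialLinearGroup (Fin 2) ℝ) (x : ℝ) : ℝ :=
  (g.val 0 0 * x + g.val 0 1) / (g.val 1 0 * x + g.val 1 1)

/-- `x` and `y` are `G_q`-equivalent. -/
def GqEquiv (q : ℕ) (x y : ℝ) : Prop :=
  ∃ g ∈ Hecke q, (g.val 1 0 * x + g.val 1 1 ≠ 0) ∧ moeb g x = y

/-- Two sequences have a common tail. -/
def CommonTail (a b : ℕ → ℤ) : Prop := ∃ m n : ℕ, ∀ k : ℕ, a (m + k) = b (n + k)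

/-- The period block of `ρ_q`: `(3)` for `q = 3`, `((1)^{h_q-1}, 2)` for even `q`
and `((1)^{h_q}, 2, (1)^{h_q-1}, 2)` for odd `q ≥ 5`. -/
def rhoBlock (q : ℕ) : List ℤ :=
  if q = 3 then [3]
  else if Even q then List.replicate (hQ q - 1) 1 ++ [2]
  else List.replicate (hQ q) 1 ++ 2 :: (List.replicate (hQ q - 1) 1 ++ [2])

/-- The periodic sequence `ρ_q`. -/
def rho (q : ℕ) (i : ℕ) : ℤ := (rhoBlock q).getD (i % (rhoBlock q).length) 0

/-- `x` has the infinite regular `λ_q`-CF with digit sequence `A` (with `A 0 = a₀`). -/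
def HasRegCF (q : ℕ) (x : ℝ) (A : ℕ → ℤ) : Prop :=
  (∀ i, A (i + 1) ≠ 0) ∧ RegularSeq q (fun i => A (i + 1)) ∧ CFConvergesTo (lamq q) A x

/-- `x` has the infinite dual regular `λ_q`-CF with digit sequence `A` (with `A 0 = a₀`). -/
def HasDualRegCF (q : ℕ) (x : ℝ) (A : ℕ → ℤ) : Prop :=
  (∀ i, A (i + 1) ≠ 0) ∧ DualRegularSeq q (fun i => A (i + 1)) ∧ CFConvergesTo (lamq q) A x

/-- The digits of `x` produced by the algorithm for `f_q`: `a_{i+1} = ⟨-1 / f_q^i(x)⟩`. -/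
noncomputable def digitSeq (lam : ℝ) (x : ℝ) : ℕ → ℤ :=
  fun i => nearestLam lam (-1 / (fq lam)^[i] x)

/-- The digits of `x` produced by the algorithm for `f_q^*`: `b_{i+1} = ⟨-1 / (f_q^*)^i(x)⟩*`. -/
noncomputable def digitSeqStar (lam R : ℝ) (x : ℝ) : ℕ → ℤ :=
  fun i => nearestDual lam R (-1 / (fqstar lam R)^[i] x)

/-!
The numerators and denominators solve `u_{n+1} = a_{n+1} λ u_n - u_{n-1}` with `λ = 2 cos θ`,
`θ = π / q`. Replacing the tail `(a, 1^h)` by `(a - 1, (-1)^h)` and flipping the sign of every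
other term of the new solution, the two solutions differ by a solution of the Chebyshev recurrence
with initial values `(2 u, 2 u cos θ)`, that is by `2 u cos (j θ)`. This vanishes at
`j = h + 1` since `(h + 1) θ = π / 2`, so `p` and `q` are both multiplied by `(-1)^h`.

The denominators of a regular sequence do not vanish: by induction,
`0 ≤ ε q_{m-1} / q_m < sin ((k+1) θ) / sin ((k+2) θ)` whenever the digits end in a run of
`k ≤ h` entries `ε = ±1`, and regularity excludes runs of length `h + 1`. Regularity of the new
sequence is a case analysis on where a forbidden block `(ε^h, ε m)` could end.
-/

open Real

/-- `contSeq lam a u₀ u₁ (n + 1)` is the paper's `u_n` for `u_n = a_n λ u_{n-1} - u_{n-2}` with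
`(u_{-1}, u_0) = (u₀, u₁)`; the shift makes `p_{-1}` and `q_{-1}` available. -/
noncomputable def contSeq (lam : ℝ) (a : ℕ → ℤ) (u₀ u₁ : ℝ) : ℕ → ℝ
  | 0 => u₀
  | 1 => u₁
  | n + 2 => a (n + 1) * lam * contSeq lam a u₀ u₁ (n + 1) - contSeq lam a u₀ u₁ n

theorem cfQ_eq_contSeq (lam : ℝ) (a : ℕ → ℤ) :
    ∀ n, cfQ lam a n = contSeq lam a 0 1 (n + 1)
  | 0 => rfl
  | 1 => by simp [cfQ, contSeq]
  | n + 2 => by rw [cfQ, cfQ_eq_contSeq lam a (n + 1), cfQ_eq_contSeq lam a n]; rfl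

theorem cfP_eq_contSeq (lam : ℝ) (a : ℕ → ℤ) :
    ∀ n, cfP lam a n = contSeq lam a 1 (a 0 * lam) (n + 1)
  | 0 => rfl
  | 1 => by simp [cfP, contSeq]
  | n + 2 => by rw [cfP, cfP_eq_contSeq lam a (n + 1), cfP_eq_contSeq lam a n]; rfl

theorem contSeq_congr {lam u₀ u₁ : ℝ} {a b : ℕ → ℤ} : ∀ {n}, (∀ i < n, a i = b i) →
    contSeq lam a u₀ u₁ n = contSeq lam b u₀ u₁ n
  | 0, _ => rfl
  | 1, _ => rfl
  | n + 2, hab => by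
    rw [contSeq, contSeq, hab (n + 1) (by omega), contSeq_congr fun i hi => hab i (by omega),
      contSeq_congr fun i hi => hab i (by omega)]

theorem eq_mul_cos_of_chebyshev_rec {θ c : ℝ} {n : ℕ} {d : ℕ → ℝ} (h0 : d 0 = c)
    (h1 : d 1 = c * cos θ) (hrec : ∀ j, j + 2 ≤ n → d (j + 2) = 2 * cos θ * d (j + 1) - d j) :
    ∀ j ≤ n, d j = c * cos (j * θ) := by
  intro j
  induction j using Nat.twoStepInduction with
  | zero => simp [h0]
  | one => simp [h1]
  | more j ih₀ ih₁ =>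
    intro hj
    rw [hrec j hj, ih₁ (by omega), ih₀ (by omega)]
    have hcos := cos_add ((j + 1) * θ) θ
    have hcos' := cos_sub ((j + 1) * θ) θ
    push_cast
    rw [show ((j : ℝ) + 2) * θ = (j + 1) * θ + θ by ring, hcos,
      show (j : ℝ) * θ = (j + 1) * θ - θ by ring, hcos']
    ring

/-- Multiplying by `(-1)^(j+1)` turns the `-λ` recurrence into the `λ` one; the difference of
the two solutions then has initial values `(2 x₀, 2 x₀ cos θ)`, so it is `2 x₀ cos (j θ)`. -/
theorem eq_neg_one_pow_mul_of_rec {θ : ℝ} {n : ℕ} {x y : ℕ → ℝ}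
    (hx : ∀ j, j + 2 ≤ n → x (j + 2) = 2 * cos θ * x (j + 1) - x j)
    (hy : ∀ j, j + 2 ≤ n → y (j + 2) = -(2 * cos θ) * y (j + 1) - y j)
    (h0 : y 0 = x 0) (h1 : y 1 = x 1 - 2 * cos θ * x 0) (hn : cos (n * θ) = 0) :
    y n = (-1) ^ (n + 1) * x n := by
  have hd := eq_mul_cos_of_chebyshev_rec (θ := θ) (c := 2 * x 0) (n := n)
    (d := fun j => x j - (-1) ^ (j + 1) * y j) (by simp [h0]; ring) (by simp [h1]; ring)
    (fun j hj => by simp only [hx j hj, hy j hj, pow_succ]; ring) n le_rfl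
  rw [hn, mul_zero, sub_eq_zero] at hd
  rw [hd, ← mul_assoc, ← mul_pow, neg_one_mul, neg_neg, one_pow, one_mul]

theorem contSeq_alternating_tail {θ : ℝ} {h m : ℕ} {a b : ℕ → ℤ} {u₀ u₁ : ℝ}
    (hab : ∀ i ≤ m, a i = b i) (hlast : b (m + 1) = a (m + 1) - 1)
    (ha : ∀ j, 1 ≤ j → j ≤ h → a (m + 1 + j) = 1) (hb : ∀ j, 1 ≤ j → j ≤ h → b (m + 1 + j) = -1)
    (hθ : cos ((h + 1) * θ) = 0) :
    contSeq (2 * cos θ) b u₀ u₁ (m + 2 + h) =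
      (-1) ^ h * contSeq (2 * cos θ) a u₀ u₁ (m + 2 + h) := by
  have hcongr : ∀ i ≤ m + 1, contSeq (2 * cos θ) b u₀ u₁ i = contSeq (2 * cos θ) a u₀ u₁ i :=
    fun i hi => (contSeq_congr fun k hk => hab k (by omega)).symm
  have key := eq_neg_one_pow_mul_of_rec (θ := θ) (n := h + 1)
    (x := fun j => contSeq (2 * cos θ) a u₀ u₁ (m + 1 + j))
    (y := fun j => contSeq (2 * cos θ) b u₀ u₁ (m + 1 + j))
    (fun j hj => by
      change contSeq _ a u₀ u₁ (m + 1 + j + 2) = _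
      rw [contSeq, show m + 1 + j + 1 = m + 1 + (j + 1) from rfl, ha (j + 1) (by omega) (by omega)]
      push_cast; ring)
    (fun j hj => by
      change contSeq _ b u₀ u₁ (m + 1 + j + 2) = _
      rw [contSeq, show m + 1 + j + 1 = m + 1 + (j + 1) from rfl, hb (j + 1) (by omega) (by omega)]
      push_cast; ring)
    (hcongr _ le_rfl)
    (by
      change contSeq _ b u₀ u₁ (m + 2) = contSeq _ a u₀ u₁ (m + 2) - _ * contSeq _ a u₀ u₁ (m + 1)
      rw [contSeq, contSeq, hlast, hcongr (m + 1) le_rfl, hcongr m (by omega)]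
      push_cast; ring)
    (by push_cast; exact hθ)
  rw [show m + 2 + h = m + 1 + (h + 1) by omega, key]
  ring

section HeckeAngle

variable {θ : ℝ} {h : ℕ}

theorem sin_mul_pos_of_lt (hθ : (h + 1) * θ = π / 2) {j : ℕ} (hj₀ : 0 < j) (hj : j < 2 * h + 2) :
    0 < sin (j * θ) := by
  have hθ₀ : 0 < θ := by nlinarith [pi_pos]
  have hj' : (j : ℝ) + 1 ≤ 2 * h + 2 := by exact_mod_cast hj
  apply sin_pos_of_pos_of_lt_pi (by positivity)
  nlinarith

theorem sin_mul_nonneg_of_le (hθ : (h + 1) * θ = π / 2) {j : ℕ} (hj : j ≤ 2 * h + 2) :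
    0 ≤ sin (j * θ) := by
  have hθ₀ : 0 < θ := by nlinarith [pi_pos]
  have hj' : (j : ℝ) ≤ 2 * h + 2 := by exact_mod_cast hj
  apply sin_nonneg_of_nonneg_of_le_pi (by positivity)
  nlinarith

theorem cos_pos_of_mul_eq (hh : 1 ≤ h) (hθ : (h + 1) * θ = π / 2) : 0 < cos θ := by
  have hθ₀ : 0 < θ := by nlinarith [pi_pos]
  have hh' : (1 : ℝ) ≤ h := by exact_mod_cast hh
  apply cos_pos_of_mem_Ioo ⟨by linarith [pi_pos], by nlinarith⟩

theorem sin_add_two_mul_eq (x θ : ℝ) :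
    sin ((x + 2) * θ) = 2 * cos θ * sin ((x + 1) * θ) - sin (x * θ) := by
  rw [show (x + 2) * θ = (x + 1) * θ + θ by ring, show x * θ = (x + 1) * θ - θ by ring,
    sin_add, sin_sub]
  ring

/-- `sinRatio θ k = sin ((k + 1) θ) / sin ((k + 2) θ)` bounds `|q_{m-1} / q_m|` when the digits
end in a run of `k` equal entries `±1`; it solves `d₀ = 1 / λ`, `d_{k+1} = 1 / (λ - d_k)`. -/
noncomputable def sinRatio (θ : ℝ) (k : ℕ) : ℝ := sin ((k + 1) * θ) / sin ((k + 2) * θ)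

theorem sinRatio_pos (hθ : (h + 1) * θ = π / 2) (hh : 1 ≤ h) {k : ℕ} (hk : k ≤ h) :
    0 < sinRatio θ k := by
  have h₁ := sin_mul_pos_of_lt hθ (j := k + 1) (by omega) (by omega)
  have h₂ := sin_mul_pos_of_lt hθ (j := k + 2) (by omega) (by omega)
  push_cast at h₁ h₂
  exact div_pos h₁ h₂

theorem sinRatio_zero (hθ : sin θ ≠ 0) : sinRatio θ 0 = 1 / (2 * cos θ) := by
  rw [sinRatio, Nat.cast_zero, zero_add, zero_add, one_mul, sin_two_mul]
  field_simp

theorem sinRatio_succ {k : ℕ} (hk : sin ((k + 2) * θ) ≠ 0) :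
    sinRatio θ (k + 1) = 1 / (2 * cos θ - sinRatio θ k) := by
  have := sin_add_two_mul_eq ((k : ℝ) + 1) θ
  rw [sinRatio, sinRatio, Nat.cast_succ, this, add_assoc, one_add_one_eq_two]
  field_simp

theorem sinRatio_le (hθ : (h + 1) * θ = π / 2) (hh : 1 ≤ h) {k : ℕ} (hk : k ≤ h) :
    sinRatio θ k ≤ 2 * cos θ := by
  have h₂ := sin_mul_pos_of_lt hθ (j := k + 2) (by omega) (by omega)
  have h₃ := sin_mul_nonneg_of_le hθ (j := k + 3) (by omega)
  have := sin_add_two_mul_eq ((k : ℝ) + 1) θ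
  push_cast at h₂ h₃
  rw [show (k : ℝ) + 1 + 2 = k + 3 by ring, add_assoc, one_add_one_eq_two] at this
  rw [sinRatio, div_le_iff₀ h₂]
  linarith

end HeckeAngle

section DenominatorBound

variable {θ : ℝ} {h : ℕ}

theorem one_div_sub_lt_sinRatio_succ (hθ : (h + 1) * θ = π / 2) (hh : 1 ≤ h) {k : ℕ} (hk : k < h)
    {t : ℝ} (ht : t < sinRatio θ k) :
    0 < 2 * cos θ - t ∧ 1 / (2 * cos θ - t) < sinRatio θ (k + 1) := by
  have hsin := sin_mul_pos_of_lt hθ (j := k + 2) (by omega) (by omega)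
  push_cast at hsin
  have hsucc := sinRatio_succ (θ := θ) hsin.ne'
  have hd : 0 < 2 * cos θ - sinRatio θ k :=
    one_div_pos.mp (hsucc ▸ sinRatio_pos hθ hh (k := k + 1) hk)
  exact ⟨by linarith, hsucc ▸ one_div_lt_one_div_of_lt hd (by linarith)⟩

theorem one_div_sub_lt_sinRatio_zero (hθ : (h + 1) * θ = π / 2) (hh : 1 ≤ h) {k : ℕ} (hk : k ≤ h)
    {s c : ℝ} (hs : |s| < sinRatio θ k) (hc : 2 ≤ c) :
    0 < c * (2 * cos θ) - s ∧ 1 / (c * (2 * cos θ) - s) < sinRatio θ 0 := by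
  have hcos := cos_pos_of_mul_eq hh hθ
  have hle := sinRatio_le hθ hh hk
  have hs' := le_abs_self s
  have hgt : 2 * cos θ < c * (2 * cos θ) - s := by nlinarith
  have hsin : sin θ ≠ 0 := by simpa using (sin_mul_pos_of_lt hθ (j := 1) one_pos (by omega)).ne'
  rw [sinRatio_zero hsin]
  exact ⟨by linarith, one_div_lt_one_div_of_lt (by linarith) hgt⟩

theorem one_div_add_lt_sinRatio_one (hθ : (h + 1) * θ = π / 2) (hh : 1 ≤ h) {t : ℝ} (ht : 0 ≤ t) :
    0 < 2 * cos θ + t ∧ 1 / (2 * cos θ + t) < sinRatio θ 1 := by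
  have hsin := sin_mul_pos_of_lt hθ (j := 2) (by omega) (by omega)
  push_cast at hsin
  have hsucc := sinRatio_succ (θ := θ) (k := 0) (by simpa using hsin.ne')
  have hd : 0 < 2 * cos θ - sinRatio θ 0 := one_div_pos.mp (hsucc ▸ sinRatio_pos hθ hh hh)
  have h₀ := sinRatio_pos hθ hh (k := 0) (Nat.zero_le h)
  exact ⟨by linarith, hsucc ▸ one_div_lt_one_div_of_lt hd (by linarith)⟩

theorem ratio_bound_of_rec {ε y x c D : ℝ} (hε : ε = 1 ∨ ε = -1) (hy : y ≠ 0)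
    (hpos : 0 < ε * (c - x / y)) (hlt : 1 / (ε * (c - x / y)) < D) :
    c * y - x ≠ 0 ∧ 0 ≤ ε * (y / (c * y - x)) ∧ ε * (y / (c * y - x)) < D := by
  have hsplit : c * y - x = y * (c - x / y) := by field_simp
  have hne : c - x / y ≠ 0 := by rintro h; simp [h] at hpos
  have heq : ε * (y / (c * y - x)) = 1 / (ε * (c - x / y)) := by
    rw [hsplit]
    rcases hε with rfl | rfl <;> field_simp
  exact ⟨hsplit ▸ mul_ne_zero hy hne, heq ▸ (one_div_pos.mpr hpos).le, heq ▸ hlt⟩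

theorem eq_or_eq_neg_or_two_le_mul {ε b : ℤ} (hε : ε = 1 ∨ ε = -1) (hb : b ≠ 0) :
    b = ε ∨ b = -ε ∨ ∃ ε' : ℤ, (ε' = 1 ∨ ε' = -1) ∧ 2 ≤ ε' * b := by
  rcases le_or_gt 2 b with h | h
  · exact Or.inr (Or.inr ⟨1, Or.inl rfl, by omega⟩)
  rcases le_or_gt b (-2) with h' | h'
  · exact Or.inr (Or.inr ⟨-1, Or.inr rfl, by omega⟩)
  omega

/-- In the paper's indexing: `q_m ≠ 0` and `0 ≤ ε q_{m-1} / q_m < sinRatio θ k`, where the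
digits end in the run `a_{m-k+1} = ⋯ = a_m = ε`. -/
def TrailingRunBound (θ : ℝ) (h : ℕ) (a : ℕ → ℤ) (m : ℕ) : Prop :=
  contSeq (2 * cos θ) a 0 1 (m + 1) ≠ 0 ∧
    ∃ (ε : ℤ) (k : ℕ), (ε = 1 ∨ ε = -1) ∧ k ≤ h ∧ k ≤ m ∧ (∀ j < k, a (m - j) = ε) ∧
      0 ≤ ε * (contSeq (2 * cos θ) a 0 1 m / contSeq (2 * cos θ) a 0 1 (m + 1)) ∧
      ε * (contSeq (2 * cos θ) a 0 1 m / contSeq (2 * cos θ) a 0 1 (m + 1)) < sinRatio θ k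

theorem trailingRunBound_zero (hθ : (h + 1) * θ = π / 2) (hh : 1 ≤ h) (a : ℕ → ℤ) :
    TrailingRunBound θ h a 0 :=
  ⟨one_ne_zero, 1, 0, Or.inl rfl, Nat.zero_le h, le_rfl, nofun, by simp [contSeq],
    by simpa [contSeq] using sinRatio_pos hθ hh (Nat.zero_le h)⟩

theorem trailingRunBound_succ_of_one_div_lt {a : ℕ → ℤ} {m k : ℕ} {ε : ℤ}
    (hu : contSeq (2 * cos θ) a 0 1 (m + 1) ≠ 0) (hε : ε = 1 ∨ ε = -1) (hkh : k ≤ h)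
    (hkm : k ≤ m + 1) (hrun : ∀ j < k, a (m + 1 - j) = ε)
    (hpos : 0 < ε * (a (m + 1) * (2 * cos θ) -
      contSeq (2 * cos θ) a 0 1 m / contSeq (2 * cos θ) a 0 1 (m + 1)))
    (hlt : 1 / (ε * (a (m + 1) * (2 * cos θ) -
      contSeq (2 * cos θ) a 0 1 m / contSeq (2 * cos θ) a 0 1 (m + 1))) < sinRatio θ k) :
    TrailingRunBound θ h a (m + 1) := by
  have hεR : (ε : ℝ) = 1 ∨ (ε : ℝ) = -1 := by rcases hε with rfl | rfl <;> norm_num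
  obtain ⟨hne, h₀, hlt'⟩ := ratio_bound_of_rec hεR hu hpos hlt
  unfold TrailingRunBound
  rw [contSeq]
  exact ⟨hne, ε, k, hε, hkh, hkm, hrun, h₀, hlt'⟩

theorem TrailingRunBound.succ (hθ : (h + 1) * θ = π / 2) (hh : 1 ≤ h) {a : ℕ → ℤ} {m : ℕ}
    (hm : TrailingRunBound θ h a m) (hb : a (m + 1) ≠ 0)
    (hrun : h ≤ m → ∀ ε, (ε = 1 ∨ ε = -1) → ∃ j ≤ h, a (m + 1 - h + j) ≠ ε) :
    TrailingRunBound θ h a (m + 1) := by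
  obtain ⟨hu, ε, k, hε, hkh, hkm, hrunk, ht₀, ht⟩ := hm
  set s := contSeq (2 * cos θ) a 0 1 m / contSeq (2 * cos θ) a 0 1 (m + 1)
  have hεR : (ε : ℝ) = 1 ∨ (ε : ℝ) = -1 := by rcases hε with rfl | rfl <;> norm_num
  rcases eq_or_eq_neg_or_two_le_mul hε hb with hbε | hbε | ⟨ε', hε', hb2⟩
  · have hk : k < h := by
      by_contra hkh'
      obtain ⟨j, hj, hne⟩ := hrun (by omega) ε hε
      rcases eq_or_lt_of_le hj with hjh | hj'
      · exact hne (by rw [hjh, show m + 1 - h + h = m + 1 by omega, hbε])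
      · exact hne (by rw [show m + 1 - h + j = m - (h - 1 - j) by omega]; exact hrunk _ (by omega))
    obtain ⟨hpos, hlt⟩ := one_div_sub_lt_sinRatio_succ hθ hh hk ht
    have e : (ε : ℝ) * (a (m + 1) * (2 * cos θ) - s) = 2 * cos θ - ε * s := by
      rw [hbε]; rcases hεR with hε₁ | hε₁ <;> rw [hε₁] <;> ring
    refine trailingRunBound_succ_of_one_div_lt hu hε hk (by omega) (fun j hj => ?_)
      (e ▸ hpos) (e ▸ hlt)
    rcases j with _ | j
    · exact hbε
    · rw [show m + 1 - (j + 1) = m - j by omega]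
      exact hrunk j (by omega)
  · obtain ⟨hpos, hlt⟩ := one_div_add_lt_sinRatio_one hθ hh ht₀
    have e : ((-ε : ℤ) : ℝ) * (a (m + 1) * (2 * cos θ) - s) = 2 * cos θ + ε * s := by
      rw [hbε]; push_cast; rcases hεR with hε₁ | hε₁ <;> rw [hε₁] <;> ring
    refine trailingRunBound_succ_of_one_div_lt hu (by omega) hh (by omega) (fun j hj => ?_)
      (e ▸ hpos) (e ▸ hlt)
    rwa [show j = 0 by omega]
  · have hs : |(ε' : ℝ) * s| < sinRatio θ k := by
      have h₁ : |(ε' : ℝ)| = 1 := by rcases hε' with rfl | rfl <;> norm_num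
      have h₂ : |(ε : ℝ)| = 1 := by rcases hε with rfl | rfl <;> norm_num
      rw [abs_mul, h₁, one_mul, ← one_mul |s|, ← h₂, ← abs_mul, abs_of_nonneg ht₀]
      exact ht
    obtain ⟨hpos, hlt⟩ := one_div_sub_lt_sinRatio_zero hθ hh hkh hs
      (c := ((ε' * a (m + 1) : ℤ) : ℝ)) (by exact_mod_cast hb2)
    have e : (ε' : ℝ) * (a (m + 1) * (2 * cos θ) - s) =
        ((ε' * a (m + 1) : ℤ) : ℝ) * (2 * cos θ) - ε' * s := by push_cast; ring
    exact trailingRunBound_succ_of_one_div_lt hu hε' (Nat.zero_le h) (by omega) nofun (e ▸ hpos)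
      (e ▸ hlt)

theorem contSeq_ne_zero_of_no_long_run (hθ : (h + 1) * θ = π / 2) (hh : 1 ≤ h) {a : ℕ → ℤ}
    {N : ℕ} (hnz : ∀ i, 1 ≤ i → i ≤ N → a i ≠ 0)
    (hrun : ∀ i, 1 ≤ i → i + h ≤ N → ∀ ε, (ε = 1 ∨ ε = -1) → ∃ j ≤ h, a (i + j) ≠ ε) :
    contSeq (2 * cos θ) a 0 1 (N + 1) ≠ 0 := by
  suffices ∀ m ≤ N, TrailingRunBound θ h a m from (this N le_rfl).1
  intro m
  induction m with
  | zero => exact fun _ => trailingRunBound_zero hθ hh a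
  | succ m ih =>
    exact fun hm => (ih (by omega)).succ hθ hh (hnz _ (by omega) hm)
      fun hhm => hrun (m + 1 - h) (by omega) (by omega)

end DenominatorBound

section Regularity

theorem replicate_append_singleton_infix_iff {α : Type*} {n : ℕ} {a x : α} {l : List α} :
    List.replicate n a ++ [x] <:+: l ↔ ∃ i, (∀ j < n, l[i + j]? = some a) ∧ l[i + n]? = some x := by
  rw [List.infix_iff_getElem?]
  constructor
  · rintro ⟨k, -, hk⟩
    refine ⟨k, fun j hj => ?_, ?_⟩
    · have hkj := hk j (by simp; omega)
      rwa [List.getElem_append_left (by simpa using hj), List.getElem_replicate, add_comm] at hkj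
    · simpa [add_comm] using hk n (by simp)
  · rintro ⟨i, hrun, hx⟩
    have hlen := (List.getElem?_eq_some_iff.mp hx).1
    refine ⟨i, by simp; omega, fun j hj => ?_⟩
    simp only [List.length_append, List.length_replicate, List.length_singleton] at hj
    rcases Nat.lt_succ_iff_lt_or_eq.mp hj with hj | rfl
    · rw [List.getElem_append_left (by simpa using hj), List.getElem_replicate, add_comm]
      exact hrun j hj
    · simpa [add_comm] using hx

variable {q : ℕ}

theorem isForbidden_iff_of_even (hq : Even q) {B : List ℤ} :
    IsForbidden q B ↔ ∃ ε m : ℤ, (ε = 1 ∨ ε = -1) ∧ 1 ≤ m ∧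
      B = List.replicate (hQ q) ε ++ [ε * m] := by
  simp only [IsForbidden, if_pos hq]
  constructor
  · rintro ⟨ε, hε, hB | ⟨m, hm, hB⟩⟩
    · exact ⟨ε, 1, hε, le_rfl, by rw [hB, List.replicate_succ', mul_one]⟩
    · exact ⟨ε, m, hε, hm, hB⟩
  · rintro ⟨ε, m, hε, hm, hB⟩
    exact ⟨ε, hε, Or.inr ⟨m, hm, hB⟩⟩

theorem regularList_iff_of_even (hq : Even q) {M : List ℤ} :
    RegularList q M ↔ ∀ i (ε m : ℤ), (ε = 1 ∨ ε = -1) → 1 ≤ m →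
      (∀ j < hQ q, M[i + j]? = some ε) → M[i + hQ q]? ≠ some (ε * m) := by
  constructor
  · intro hreg i ε m hε hm hrun hlast
    exact hreg _ (replicate_append_singleton_infix_iff.mpr ⟨i, hrun, hlast⟩)
      ((isForbidden_iff_of_even hq).mpr ⟨ε, m, hε, hm, rfl⟩)
  · intro hwin B hB hforb
    obtain ⟨ε, m, hε, hm, rfl⟩ := (isForbidden_iff_of_even hq).mp hforb
    obtain ⟨i, hrun, hlast⟩ := replicate_append_singleton_infix_iff.mp hB
    exact hwin i ε m hε hm hrun hlast

theorem ne_one_of_regularList_append_replicate_one (hq : Even q) (hh : 1 ≤ hQ q) {l : List ℤ}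
    {x : ℤ} (hreg : RegularList q (l ++ x :: List.replicate (hQ q) 1)) : x ≠ 1 := by
  rintro rfl
  refine (regularList_iff_of_even hq).mp hreg l.length 1 1 (Or.inl rfl) le_rfl
    (fun j hj => ?_) ?_
  all_goals rw [← List.replicate_succ, List.getElem?_append_right (by omega),
    List.getElem?_replicate]
  · simp; omega
  · simp

theorem regularList_append_replicate_neg_one (hq : Even q) {l : List ℤ} {x : ℤ} (hx : x ≠ 0)
    (hreg : RegularList q (l ++ x :: List.replicate (hQ q) 1)) :
    RegularList q (l ++ (x - 1) :: List.replicate (hQ q) (-1)) := by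
  rw [regularList_iff_of_even hq] at hreg ⊢
  intro i ε m hε hm hrun hlast
  have hagree : ∀ p < l.length, (l ++ (x - 1) :: List.replicate (hQ q) (-1))[p]? =
      (l ++ x :: List.replicate (hQ q) 1)[p]? := fun p hp => by
    rw [List.getElem?_append_left hp, List.getElem?_append_left hp]
  have hlen := (List.getElem?_eq_some_iff.mp hlast).1
  simp only [List.length_append, List.length_cons, List.length_replicate] at hlen
  rcases lt_trichotomy (i + hQ q) l.length with hlt | heq | hgt
  · exact hreg i ε m hε hm (fun j hj => (hagree _ (by omega)).symm.trans (hrun j hj))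
      ((hagree _ hlt).symm.trans hlast)
  · rw [heq, List.getElem?_append_right le_rfl, Nat.sub_self] at hlast
    simp only [List.getElem?_cons_zero, Option.some.injEq] at hlast
    have hεx : 1 ≤ ε * x := by rcases hε with rfl | rfl <;> omega
    refine hreg i ε (ε * x) hε hεx (fun j hj => (hagree _ (by omega)).symm.trans (hrun j hj)) ?_
    rw [heq, List.getElem?_append_right le_rfl, Nat.sub_self]
    rcases hε with rfl | rfl <;> simp
  · -- the window contains `x - 1 = ε` and ends in the tail, where `ε m = -1`
    have hmid := hrun (l.length - i) (by omega)
    rw [show i + (l.length - i) = l.length by omega, List.getElem?_append_right le_rfl,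
      Nat.sub_self] at hmid
    rw [List.getElem?_append_right (by omega),
      show i + hQ q - l.length = (i + hQ q - l.length - 1) + 1 by omega, List.getElem?_cons_succ,
      List.getElem?_replicate, if_pos (by omega)] at hlast
    simp only [List.getElem?_cons_zero, Option.some.injEq] at hmid hlast
    rcases hε with rfl | rfl <;> omega

theorem no_long_run_of_regularList (hq : Even q) {a0 : ℤ} {M : List ℤ} (hreg : RegularList q M)
    (i : ℕ) (hi : 1 ≤ i) (hiM : i + hQ q ≤ M.length) (ε : ℤ) (hε : ε = 1 ∨ ε = -1) :
    ∃ j ≤ hQ q, (a0 :: M).getD (i + j) 0 ≠ ε := by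
  by_contra! hrun
  have hwin : ∀ j ≤ hQ q, M[i - 1 + j]? = some ε := fun j hj => by
    have := hrun j hj
    rw [show i + j = i - 1 + j + 1 by omega, List.getD_cons_succ,
      List.getD_eq_getElem _ _ (by omega)] at this
    rw [List.getElem?_eq_getElem (by omega), this]
  exact (regularList_iff_of_even hq).mp hreg (i - 1) ε 1 hε le_rfl
    (fun j hj => hwin j hj.le) (by rw [mul_one]; exact hwin _ le_rfl)

end Regularity

theorem two_mul_hQ_add_two {q : ℕ} (hq : Even q) (hq2 : 2 ≤ q) : 2 * hQ q + 2 = q := by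
  rw [hQ, if_pos hq]
  obtain ⟨m, rfl⟩ := hq
  omega

theorem one_le_hQ {q : ℕ} (hq : Even q) (hq4 : 4 ≤ q) : 1 ≤ hQ q := by
  have := two_mul_hQ_add_two hq (by omega)
  omega

theorem hQ_add_one_mul_pi_div {q : ℕ} (hq : Even q) (hq2 : 2 ≤ q) :
    ((hQ q : ℝ) + 1) * (π / q) = π / 2 := by
  have h : (q : ℝ) = 2 * hQ q + 2 := by exact_mod_cast (two_mul_hQ_add_two hq hq2).symm
  rw [h]
  field_simp

theorem cfDenList_ne_zero_of_regularList {q : ℕ} (hq : Even q) (hq4 : 4 ≤ q) (a0 : ℤ)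
    {M : List ℤ} (hnz : ∀ x ∈ M, x ≠ 0) (hreg : RegularList q M) :
    cfDenList (lamq q) a0 M ≠ 0 := by
  rw [cfDenList, cfQ_eq_contSeq]
  refine contSeq_ne_zero_of_no_long_run (hQ_add_one_mul_pi_div hq (by omega))
    (one_le_hQ hq hq4) (fun i hi hiM => ?_)
    (no_long_run_of_regularList hq hreg)
  rw [show i = i - 1 + 1 by omega, List.getD_cons_succ, List.getD_eq_getElem _ _ (by omega)]
  exact hnz _ (List.getElem_mem _)

section TailFlip

variable {θ : ℝ} {h : ℕ} (a0 x : ℤ) (l : List ℤ)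

theorem contSeq_getD_append_replicate_neg_one (hθ : cos ((h + 1) * θ) = 0) (u₀ u₁ : ℝ) :
    contSeq (2 * cos θ) (fun i => (a0 :: (l ++ (x - 1) :: List.replicate h (-1))).getD i 0) u₀ u₁
        (l.length + 2 + h) =
      (-1) ^ h *
        contSeq (2 * cos θ) (fun i => (a0 :: (l ++ x :: List.replicate h 1)).getD i 0) u₀ u₁
          (l.length + 2 + h) := by
  have hprefix : ∀ (t : List ℤ) (i : ℕ), i ≤ l.length →
      (a0 :: (l ++ t)).getD i 0 = (a0 :: l).getD i 0 := fun t i hi => by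
    rw [← List.cons_append, List.getD_append _ _ _ _ (by simp; omega)]
  have htail : ∀ (y z : ℤ) (j : ℕ), 1 ≤ j → j ≤ h →
      (a0 :: (l ++ y :: List.replicate h z)).getD (l.length + 1 + j) 0 = z := fun y z j h₁ h₂ => by
    rw [← List.cons_append, List.getD_append_right _ _ _ _ (by simp), List.length_cons,
      show l.length + 1 + j - (l.length + 1) = (j - 1) + 1 by omega, List.getD_cons_succ]
    exact List.getD_replicate _ (by omega)
  refine contSeq_alternating_tail (fun i hi => ?_) ?_ (htail _ _) (htail _ _) hθ
  · simp only [hprefix _ i hi]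
  · rw [← List.cons_append, ← List.cons_append, List.getD_append_right _ _ _ _ (by simp),
      List.getD_append_right _ _ _ _ (by simp)]
    simp

theorem cfDenList_append_replicate_neg_one (hθ : cos ((h + 1) * θ) = 0) :
    cfDenList (2 * cos θ) a0 (l ++ (x - 1) :: List.replicate h (-1)) =
      (-1) ^ h * cfDenList (2 * cos θ) a0 (l ++ x :: List.replicate h 1) := by
  simp only [cfDenList, cfQ_eq_contSeq, List.length_append, List.length_cons,
    List.length_replicate, show ∀ n, n + (h + 1) + 1 = n + 2 + h by omega]
  exact contSeq_getD_append_replicate_neg_one a0 x l hθ 0 1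

theorem cfValList_append_replicate_neg_one (hθ : cos ((h + 1) * θ) = 0) :
    cfValList (2 * cos θ) a0 (l ++ (x - 1) :: List.replicate h (-1)) =
      cfValList (2 * cos θ) a0 (l ++ x :: List.replicate h 1) := by
  simp only [cfValList, cfP_eq_contSeq, cfQ_eq_contSeq, List.length_append, List.length_cons,
    List.length_replicate, show ∀ n, n + (h + 1) + 1 = n + 2 + h by omega, List.getD_cons_zero]
  rw [contSeq_getD_append_replicate_neg_one a0 x l hθ,
    contSeq_getD_append_replicate_neg_one a0 x l hθ,
    mul_div_mul_left _ _ (pow_ne_zero _ (by norm_num))]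

end TailFlip

/-- For even `q ≥ 4`: if `(a₁,…,aₙ,(1)^{h_q})` is `q`-regular, then `aₙ ≠ 1`, the sequence
`(a₁,…,aₙ₋₁,aₙ-1,(-1)^{h_q})` is `q`-regular, both finite continued fractions have nonzero
last denominator, and `[a₀;a₁,…,aₙ,(1)^{h_q}] = [a₀;a₁,…,aₙ₋₁,aₙ-1,(-1)^{h_q}]`. -/
theorem stmt3 (q : ℕ) (hq : 4 ≤ q) (hqe : Even q) (a0 : ℤ) (L : List ℤ) (hL : L ≠ [])
    (hnz : ∀ x ∈ L, x ≠ 0)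
    (hreg : RegularList q (L ++ List.replicate (hQ q) 1)) :
    L.getLast hL ≠ 1 ∧
    RegularList q (L.dropLast ++ (L.getLast hL - 1) :: List.replicate (hQ q) (-1)) ∧
    cfDenList (lamq q) a0 (L ++ List.replicate (hQ q) 1) ≠ 0 ∧
    cfDenList (lamq q) a0 (L.dropLast ++ (L.getLast hL - 1) :: List.replicate (hQ q) (-1)) ≠ 0 ∧
    cfValList (lamq q) a0 (L ++ List.replicate (hQ q) 1) =
      cfValList (lamq q) a0
        (L.dropLast ++ (L.getLast hL - 1) :: List.replicate (hQ q) (-1)) := by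
  obtain ⟨l, x, rfl⟩ : ∃ l x, L = l ++ [x] := ⟨_, _, (List.dropLast_append_getLast hL).symm⟩
  simp only [List.getLast_append_singleton, List.dropLast_concat, List.append_assoc,
    List.singleton_append] at hnz hreg ⊢
  have hcos : cos ((hQ q + 1) * (π / q)) = 0 := by
    rw [hQ_add_one_mul_pi_div hqe (by omega), cos_pi_div_two]
  have hnz' : ∀ y ∈ l ++ x :: List.replicate (hQ q) 1, y ≠ 0 := fun y hy => by
    simp only [List.mem_append, List.mem_cons, List.mem_replicate] at hy
    rcases hy with hy | rfl | ⟨-, rfl⟩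
    exacts [hnz y (by simp [hy]), hnz _ (by simp), one_ne_zero]
  have hden := cfDenList_ne_zero_of_regularList hqe hq a0 hnz' hreg
  refine ⟨ne_one_of_regularList_append_replicate_one hqe (one_le_hQ hqe hq) hreg,
    regularList_append_replicate_neg_one hqe (hnz x (by simp)) hreg, hden, ?_,
    (cfValList_append_replicate_neg_one a0 x l hcos).symm⟩
  rw [lamq, cfDenList_append_replicate_neg_one a0 x l hcos]
  exact mul_ne_zero (pow_ne_zero _ (by norm_num)) hden
end

section
/- Let q ≥ 3. If q is even, the finite λ_q-continued fraction [0; (1)^{h_q}] (with a_0 = 0 followed by h_q entries 1) has nonzero last denominator and value −λ_q/2. If q is odd, the finite λ_q-continued fraction [0; (1)^{h_q}, 2, (1)^{h_q}] has nonzero last denominator and value −λ_q/2. -/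
open Filter Topology

/-!
With `λ = 2 cos θ`, `θ = π / q`, a run of digits `1` turns the recurrence of the convergents into
`x_{n+2} = 2 cos θ · x_{n+1} - x_n`, whose solutions are combinations of `sin (n θ)`.  For
`q = 2h + 2` this gives `q_h sin θ = sin ((h + 1) θ) = 1` and `p_h sin θ = -sin (h θ) = -cos θ`.
For `q = 2h + 3` the middle digit `2` glues two such runs together; the symmetry
`sin ((h + 2) θ) = sin ((h + 1) θ)` (as `(2h + 3) θ = π`) makes the last denominator and
numerator `2 sin² ((h + 1) θ) / sin² θ` and `-cos θ` times that.
-/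

open Real

lemma sin_add_one_mul_add_sin_sub_one_mul (t θ : ℝ) :
    sin ((t + 1) * θ) + sin ((t - 1) * θ) = 2 * cos θ * sin (t * θ) := by
  rw [add_mul, sub_mul, one_mul, sin_add, sin_sub]; ring

theorem mul_sin_eq_of_recurrence {θ : ℝ} {x : ℕ → ℝ} {s k : ℕ}
    (hx : ∀ j, j + 2 ≤ k → x (s + j + 2) = 2 * cos θ * x (s + j + 1) - x (s + j)) :
    x (s + k) * sin θ = x (s + 1) * sin (k * θ) - x s * sin ((k - 1) * θ) := by
  induction k using Nat.twoStepInduction with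
  | zero => simp
  | one => simp
  | more k ih₀ ih₁ =>
    have h₀ := ih₀ fun j hj => hx j (by omega)
    have h₁ := ih₁ fun j hj => hx j (by omega)
    have e₀ := sin_add_one_mul_add_sin_sub_one_mul k θ
    have e₁ := sin_add_one_mul_add_sin_sub_one_mul (k + 1) θ
    rw [← add_assoc] at h₁ ⊢
    rw [hx k le_rfl]
    push_cast at h₁ e₁ ⊢
    rw [add_sub_cancel_right] at h₁ e₁
    rw [show (k : ℝ) + 2 - 1 = k + 1 by ring]
    rw [show (k : ℝ) + 1 + 1 = k + 2 by ring] at e₁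
    linear_combination (2 * cos θ) * h₁ - h₀ - x (s + 1) * e₁ + x s * e₀

theorem mul_sin_eq_of_digits_eq_one {θ : ℝ} {A : ℕ → ℤ} {x : ℕ → ℝ}
    (hx : ∀ n, x (n + 2) = A (n + 1) * (2 * cos θ) * x (n + 1) - x n) {s k : ℕ}
    (hA : ∀ j, j + 2 ≤ k → A (s + j + 1) = 1) :
    x (s + k) * sin θ = x (s + 1) * sin (k * θ) - x s * sin ((k - 1) * θ) :=
  mul_sin_eq_of_recurrence fun j hj => by rw [hx, hA j hj]; push_cast; ring

-- `n ↦ q_{n-1}`: `cfQ` shifted by one and extended by `q_{-1} = 0`, so that the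
-- three-term recurrence holds from the start.
noncomputable def cfQShift (lam : ℝ) (A : ℕ → ℤ) : ℕ → ℝ
  | 0 => 0
  | n + 1 => cfQ lam A n

-- `n ↦ p_{n-1}`, extended by `p_{-1} = 1`.
noncomputable def cfPShift (lam : ℝ) (A : ℕ → ℤ) : ℕ → ℝ
  | 0 => 1
  | n + 1 => cfP lam A n

@[simp] lemma cfQShift_zero (lam : ℝ) (A : ℕ → ℤ) : cfQShift lam A 0 = 0 := rfl
@[simp] lemma cfQShift_one (lam : ℝ) (A : ℕ → ℤ) : cfQShift lam A 1 = 1 := rfl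
@[simp] lemma cfPShift_zero (lam : ℝ) (A : ℕ → ℤ) : cfPShift lam A 0 = 1 := rfl
@[simp] lemma cfPShift_one (lam : ℝ) (A : ℕ → ℤ) : cfPShift lam A 1 = A 0 * lam := rfl

lemma cfQShift_add_two (lam : ℝ) (A : ℕ → ℤ) (n : ℕ) :
    cfQShift lam A (n + 2) = A (n + 1) * lam * cfQShift lam A (n + 1) - cfQShift lam A n := by
  cases n <;> simp [cfQShift, cfQ]

lemma cfPShift_add_two (lam : ℝ) (A : ℕ → ℤ) (n : ℕ) :
    cfPShift lam A (n + 2) = A (n + 1) * lam * cfPShift lam A (n + 1) - cfPShift lam A n := by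
  cases n <;> simp [cfPShift, cfP]

lemma cfDenList_eq_cfQShift (lam : ℝ) (a₀ : ℤ) (L : List ℤ) :
    cfDenList lam a₀ L = cfQShift lam (fun i => (a₀ :: L).getD i 0) (L.length + 1) := rfl

lemma cfValList_eq_cfPShift_div (lam : ℝ) (a₀ : ℤ) (L : List ℤ) :
    cfValList lam a₀ L = cfPShift lam (fun i => (a₀ :: L).getD i 0) (L.length + 1) /
      cfQShift lam (fun i => (a₀ :: L).getD i 0) (L.length + 1) := rfl

lemma ne_zero_and_div_eq_neg_of_mul_eq {P Q w a c : ℝ} (ha : a ≠ 0) (hQ : Q * w = a)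
    (hP : P * w = -c * a) : Q ≠ 0 ∧ P / Q = -c := by
  have hw : w ≠ 0 := by rintro rfl; exact ha (by simpa using hQ.symm)
  have hQ₀ : Q ≠ 0 := by rintro rfl; exact ha (by simpa using hQ.symm)
  refine ⟨hQ₀, (div_eq_iff hQ₀).2 (mul_right_cancel₀ hw ?_)⟩
  linear_combination hP + c * hQ

theorem cfList_replicate_one_lamq_even (h : ℕ) :
    cfDenList (lamq (2 * h + 2)) 0 (List.replicate h 1) ≠ 0 ∧
      cfValList (lamq (2 * h + 2)) 0 (List.replicate h 1) = -lamq (2 * h + 2) / 2 := by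
  set θ := π / ((2 * h + 2 : ℕ) : ℝ)
  have hθ : ((h : ℝ) + 1) * θ = π / 2 := by
    simp only [θ]; push_cast; field_simp
  have hlam : lamq (2 * h + 2) = 2 * cos θ := rfl
  rw [cfDenList_eq_cfQShift, cfValList_eq_cfPShift_div, List.length_replicate, hlam]
  set D : ℕ → ℤ := fun i => ((0 : ℤ) :: List.replicate h 1).getD i 0
  have hD : ∀ j, j + 2 ≤ h + 1 → D (0 + j + 1) = 1 := fun j hj =>
    List.getD_replicate _ (by omega)
  have hQ := mul_sin_eq_of_digits_eq_one (θ := θ) (cfQShift_add_two _ D) hD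
  have hP := mul_sin_eq_of_digits_eq_one (θ := θ) (cfPShift_add_two _ D) hD
  push_cast at hQ hP
  rw [zero_add, hθ, add_sub_cancel_right, show (h : ℝ) * θ = π / 2 - θ by linarith,
    sin_pi_div_two, sin_pi_div_two_sub] at hQ hP
  obtain ⟨hne, hdiv⟩ := ne_zero_and_div_eq_neg_of_mul_eq (c := cos θ) one_ne_zero
    (by simpa using hQ) (by rw [hP]; simp [D])
  exact ⟨hne, by rw [hdiv]; ring⟩

theorem cfShift_mul_sin_sq_of_palindrome {θ : ℝ} {A : ℕ → ℤ} (h : ℕ)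
    (hθ : sin (((h : ℝ) + 1 + 1) * θ) = sin ((h + 1) * θ)) (hA₀ : A 0 = 0)
    (hA₁ : ∀ j, j + 2 ≤ h + 1 → A (0 + j + 1) = 1) (hA₂ : A (h + 1) = 2)
    (hA₃ : ∀ j, j + 2 ≤ h + 1 → A (h + 1 + j + 1) = 1) :
    cfQShift (2 * cos θ) A (h + 1 + (h + 1)) * sin θ ^ 2 = 2 * sin ((h + 1) * θ) ^ 2 ∧
      cfPShift (2 * cos θ) A (h + 1 + (h + 1)) * sin θ ^ 2 =
        -cos θ * (2 * sin ((h + 1) * θ) ^ 2) := by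
  have hA₁' : ∀ j, j + 2 ≤ h → A (0 + j + 1) = 1 := fun j hj => hA₁ j (by omega)
  have hQ₀ := mul_sin_eq_of_digits_eq_one (θ := θ) (cfQShift_add_two _ A) hA₁'
  have hQ₁ := mul_sin_eq_of_digits_eq_one (θ := θ) (cfQShift_add_two _ A) hA₁
  have hQ₂ := mul_sin_eq_of_digits_eq_one (θ := θ) (cfQShift_add_two _ A) hA₃
  have hQ₃ : cfQShift (2 * cos θ) A (h + 1 + 1) =
      A (h + 1) * (2 * cos θ) * cfQShift (2 * cos θ) A (h + 1) - cfQShift (2 * cos θ) A h :=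
    cfQShift_add_two _ A h
  have hP₀ := mul_sin_eq_of_digits_eq_one (θ := θ) (cfPShift_add_two _ A) hA₁'
  have hP₁ := mul_sin_eq_of_digits_eq_one (θ := θ) (cfPShift_add_two _ A) hA₁
  have hP₂ := mul_sin_eq_of_digits_eq_one (θ := θ) (cfPShift_add_two _ A) hA₃
  have hP₃ : cfPShift (2 * cos θ) A (h + 1 + 1) =
      A (h + 1) * (2 * cos θ) * cfPShift (2 * cos θ) A (h + 1) - cfPShift (2 * cos θ) A h :=
    cfPShift_add_two _ A h
  simp only [zero_add, hA₀, hA₂, cfQShift_zero, cfQShift_one, cfPShift_zero, cfPShift_one,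
    Int.cast_zero, zero_mul] at hQ₀ hQ₁ hQ₂ hQ₃ hP₀ hP₁ hP₂ hP₃
  push_cast at hQ₀ hQ₁ hQ₂ hQ₃ hP₀ hP₁ hP₂ hP₃
  have e₀ := sin_add_one_mul_add_sin_sub_one_mul h θ
  have e₁ := sin_add_one_mul_add_sin_sub_one_mul (h + 1) θ
  rw [hθ] at e₁
  simp only [add_sub_cancel_right] at hQ₁ hQ₂ hP₁ hP₂ e₁
  set s := sin ((h + 1) * θ)
  set t := sin (h * θ)
  constructor
  · linear_combination sin θ * hQ₂ + s * sin θ * hQ₃ + (4 * cos θ * s - t) * hQ₁ - s * hQ₀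
      - 2 * s * e₁
  · linear_combination sin θ * hP₂ + s * sin θ * hP₃ + (4 * cos θ * s - t) * hP₁ - s * hP₀
      + s * e₀ + (t - s) * e₁

theorem cfList_palindrome_lamq_odd (h : ℕ) :
    cfDenList (lamq (2 * h + 3)) 0 (List.replicate h 1 ++ 2 :: List.replicate h 1) ≠ 0 ∧
      cfValList (lamq (2 * h + 3)) 0 (List.replicate h 1 ++ 2 :: List.replicate h 1) =
        -lamq (2 * h + 3) / 2 := by
  set θ := π / ((2 * h + 3 : ℕ) : ℝ)
  have hθ : ((h : ℝ) + 1 + 1) * θ = π - ((h : ℝ) + 1) * θ := by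
    simp only [θ]; push_cast; field_simp; ring
  have hθ_pos : 0 < ((h : ℝ) + 1) * θ := by positivity
  have hθ_lt : ((h : ℝ) + 1) * θ < π := by nlinarith [pi_pos]
  have hs : 0 < sin ((h + 1) * θ) := sin_pos_of_pos_of_lt_pi hθ_pos hθ_lt
  have hlam : lamq (2 * h + 3) = 2 * cos θ := rfl
  have hlen : (List.replicate h (1 : ℤ) ++ 2 :: List.replicate h 1).length + 1 =
      h + 1 + (h + 1) := by
    simp; omega
  rw [cfDenList_eq_cfQShift, cfValList_eq_cfPShift_div, hlen, hlam]
  obtain ⟨hQ, hP⟩ := cfShift_mul_sin_sq_of_palindrome (θ := θ)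
    (A := fun i => ((0 : ℤ) :: (List.replicate h 1 ++ 2 :: List.replicate h 1)).getD i 0) h
    (by rw [hθ, sin_pi_sub]) rfl
    (fun j hj => by
      simp only [zero_add, List.getD_cons_succ]
      rw [List.getD_append _ _ _ _ (by simp; omega), List.getD_replicate _ (by omega)])
    (by simp only [List.getD_cons_succ]; rw [List.getD_append_right _ _ _ _ (by simp)]; simp)
    (fun j hj => by
      simp only [List.getD_cons_succ]
      rw [List.getD_append_right _ _ _ _ (by simp; omega), List.length_replicate,
        show h + 1 + j - h = j + 1 by omega, List.getD_cons_succ]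
      exact List.getD_replicate _ (by omega))
  obtain ⟨hne, hdiv⟩ := ne_zero_and_div_eq_neg_of_mul_eq (by positivity) hQ hP
  exact ⟨hne, by rw [hdiv]; ring⟩

lemma hQ_two_mul_add_two (h : ℕ) : hQ (2 * h + 2) = h := by
  simp [hQ, parity_simps]

lemma hQ_two_mul_add_three (h : ℕ) : hQ (2 * h + 3) = h := by
  simp [hQ, parity_simps]

/-- The point `-λ_q/2` has the finite `λ_q`-CF `[0; (1)^{h_q}]` for even `q` and
`[0; (1)^{h_q}, 2, (1)^{h_q}]` for odd `q`. -/
theorem stmt8 (q : ℕ) (hq : 3 ≤ q) :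
    (Even q →
      cfDenList (lamq q) 0 (List.replicate (hQ q) 1) ≠ 0 ∧
        cfValList (lamq q) 0 (List.replicate (hQ q) 1) = -(lamq q) / 2) ∧
    (Odd q →
      cfDenList (lamq q) 0
        (List.replicate (hQ q) 1 ++ 2 :: List.replicate (hQ q) 1) ≠ 0 ∧
        cfValList (lamq q) 0
          (List.replicate (hQ q) 1 ++ 2 :: List.replicate (hQ q) 1) = -(lamq q) / 2) := by
  refine ⟨fun ⟨k, hk⟩ => ?_, fun ⟨k, hk⟩ => ?_⟩
  · obtain ⟨h, rfl⟩ : ∃ h, q = 2 * h + 2 := ⟨k - 1, by omega⟩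
    rw [hQ_two_mul_add_two]
    exact cfList_replicate_one_lamq_even h
  · obtain ⟨h, rfl⟩ : ∃ h, q = 2 * h + 3 := ⟨k - 1, by omega⟩
    rw [hQ_two_mul_add_three]
    exact cfList_palindrome_lamq_odd h
end

section
/- Let q ≥ 3 and let x ∈ I_q satisfy f_q^n(x) ∉ {−λ_q/2, λ_q/2} for all n ≥ 0. If (a_i) and (b_i) are (finite or infinite) q-regular sequences of nonzero integers such that the λ_q-continued fractions [0; a_1, a_2, …] and [0; b_1, b_2, …] both converge to x (for a finite sequence this means the value p_L/q_L of the finite continued fraction equals x), then the two sequences have the same length and identical entries. -/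
open Filter Topology

/-- A finite or infinite digit sequence. -/
def SeqRegular (q : ℕ) : List ℤ ⊕ (ℕ → ℤ) → Prop
  | Sum.inl L => (∀ x ∈ L, x ≠ 0) ∧ RegularList q L
  | Sum.inr a => (∀ i, a i ≠ 0) ∧ RegularSeq q a

/-- The continued fraction `[0; a₁, a₂, …]` given by the (finite or infinite) digit
sequence converges to `x`. -/
def SeqConvTo (lam : ℝ) : List ℤ ⊕ (ℕ → ℤ) → ℝ → Prop
  | Sum.inl L, x => cfDenList lam 0 L ≠ 0 ∧ cfValList lam 0 L = x
  | Sum.inr a, x => CFConvergesTo lam (fun n => if n = 0 then 0 else a (n - 1)) x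

/-!
Prepending a digit `a` to a continued fraction acts on its value as `v ↦ -1 / (aλ + v)`.
The key estimate is that every finite `q`-regular sequence of nonzero digits has its value in
`I_q = [-λ/2, λ/2]` (and a nonvanishing last denominator). It is proved by induction on the
length, with the sharper lower bounds `-cos((j+1)π/q) / cos(jπ/q)` when the sequence may follow
`1^j`, and `-sin(kπ/q) / sin((k+1)π/q)` when it may follow `1^{h_q}, 2, 1^{h_q-k}`; the upper
bound comes from the symmetry `a ↦ -a`. Passing to the limit, the same holds for infinite
regular sequences, whose tails `[0; a₂, …]` converge to `-1/x - a₁λ`.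

So if `[0; a₁, …]` and `[0; b₁, …]` both equal `x`, then `-1/x - a₁λ` and `-1/x - b₁λ` lie in
`I_q`, while `f_q(x) = -1/x - ⟨-1/x⟩λ` lies in the interior of `I_q` by hypothesis. This forces
`a₁ = b₁ = ⟨-1/x⟩`, both tails expand `f_q(x)`, and we continue along the orbit of `x`.
-/

namespace RosenCF

open Real List

section Convergents

variable (lam : ℝ)

theorem cfP_add_two (A : ℕ → ℤ) (n : ℕ) :
    cfP lam A (n + 2) = A (n + 2) * lam * cfP lam A (n + 1) - cfP lam A n := rfl

theorem cfQ_add_two (A : ℕ → ℤ) (n : ℕ) :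
    cfQ lam A (n + 2) = A (n + 2) * lam * cfQ lam A (n + 1) - cfQ lam A n := rfl

theorem cfP_cfQ_congr {A A' : ℕ → ℤ} (n : ℕ) (h : ∀ i ≤ n, A i = A' i) :
    cfP lam A n = cfP lam A' n ∧ cfQ lam A n = cfQ lam A' n := by
  induction n using Nat.twoStepInduction with
  | zero => simp [cfP, cfQ, h 0 le_rfl]
  | one => simp [cfP, cfQ, h 0 zero_le_one, h 1 le_rfl]
  | more n ih₀ ih₁ =>
    obtain ⟨hP₀, hQ₀⟩ := ih₀ fun i hi => h i (by omega)
    obtain ⟨hP₁, hQ₁⟩ := ih₁ fun i hi => h i (by omega)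
    simp only [cfP, cfQ, hP₀, hQ₀, hP₁, hQ₁, h (n + 2) le_rfl, and_self]

/-- Prepending the digit `A₁ 1` to the digits of `A₂` acts on `[0; …]` as
`v ↦ -1 / (A₁ 1 λ + v)`. -/
theorem cfP_cfQ_prepend {A₁ A₂ : ℕ → ℤ} (h₁ : A₁ 0 = 0) (h₂ : A₂ 0 = 0)
    (hshift : ∀ k, A₁ (k + 2) = A₂ (k + 1)) (n : ℕ) :
    cfP lam A₁ (n + 1) = -cfQ lam A₂ n ∧
      cfQ lam A₁ (n + 1) = A₁ 1 * lam * cfQ lam A₂ n + cfP lam A₂ n := by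
  induction n using Nat.twoStepInduction with
  | zero => simp [cfP, cfQ, h₁, h₂]
  | one => simp only [cfP, cfQ, h₁, h₂, hshift 0]; push_cast; constructor <;> ring
  | more n ih₀ ih₁ =>
    rw [cfP_add_two lam A₁ (n + 1), cfQ_add_two lam A₁ (n + 1), cfP_add_two lam A₂ n,
      cfQ_add_two lam A₂ n, hshift (n + 1), ih₀.1, ih₀.2, ih₁.1, ih₁.2]
    constructor <;> ring

end Convergents

section FiniteCF

variable (lam : ℝ)

/-- The numerator `p_L` of `[0; a₁, …, a_L]`. -/
noncomputable def cfNumList (L : List ℤ) : ℝ :=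
  cfP lam (fun i => ((0 : ℤ) :: L).getD i 0) L.length

theorem cfValList_eq_div (L : List ℤ) :
    cfValList lam 0 L = cfNumList lam L / cfDenList lam 0 L := rfl

@[simp] theorem cfNumList_nil : cfNumList lam [] = 0 := by simp [cfNumList, cfP]

@[simp] theorem cfDenList_nil : cfDenList lam 0 [] = 1 := rfl

@[simp] theorem cfValList_nil : cfValList lam 0 [] = 0 := by simp [cfValList_eq_div]

theorem cfNumList_cons (a : ℤ) (L : List ℤ) :
    cfNumList lam (a :: L) = -cfDenList lam 0 L :=
  (cfP_cfQ_prepend lam (A₁ := fun i => ((0 : ℤ) :: a :: L).getD i 0)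
    (A₂ := fun i => ((0 : ℤ) :: L).getD i 0) rfl rfl (fun _ => rfl)
    L.length).1

theorem cfDenList_cons (a : ℤ) (L : List ℤ) :
    cfDenList lam 0 (a :: L) = a * lam * cfDenList lam 0 L + cfNumList lam L :=
  (cfP_cfQ_prepend lam (A₁ := fun i => ((0 : ℤ) :: a :: L).getD i 0)
    (A₂ := fun i => ((0 : ℤ) :: L).getD i 0) rfl rfl (fun _ => rfl)
    L.length).2

variable {lam}

theorem cfDenList_cons_of_ne_zero (a : ℤ) {L : List ℤ} (hL : cfDenList lam 0 L ≠ 0) :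
    cfDenList lam 0 (a :: L) = (a * lam + cfValList lam 0 L) * cfDenList lam 0 L := by
  rw [cfDenList_cons, cfValList_eq_div]
  field_simp

theorem cfValList_cons (a : ℤ) {L : List ℤ} (hL : cfDenList lam 0 L ≠ 0) :
    cfValList lam 0 (a :: L) = -1 / (a * lam + cfValList lam 0 L) := by
  rw [cfValList_eq_div lam (a :: L), cfNumList_cons, cfDenList_cons_of_ne_zero a hL,
    neg_div, neg_div, mul_comm, ← div_div, div_self hL]

theorem cfNumList_cfDenList_map_neg (L : List ℤ) :
    cfNumList lam (L.map (-·)) = (-1) ^ (L.length + 1) * cfNumList lam L ∧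
      cfDenList lam 0 (L.map (-·)) = (-1) ^ L.length * cfDenList lam 0 L := by
  induction L with
  | nil => simp
  | cons a L ih =>
    simp only [map_cons, cfNumList_cons, cfDenList_cons, ih.1, ih.2, length_cons]
    push_cast
    constructor <;> ring

theorem cfValList_map_neg (L : List ℤ) :
    cfValList lam 0 (L.map (-·)) = -cfValList lam 0 L := by
  obtain ⟨hP, hK⟩ := cfNumList_cfDenList_map_neg (lam := lam) L
  rw [cfValList_eq_div, cfValList_eq_div, hP, hK, pow_succ, mul_comm _ (-1 : ℝ), mul_assoc,
    mul_div_assoc, mul_div_mul_left _ _ (pow_ne_zero _ (by norm_num)), neg_one_mul]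

end FiniteCF

section Angles

noncomputable def angle (q k : ℕ) : ℝ := k * (π / q)

theorem angle_succ (q k : ℕ) : angle q (k + 1) = angle q k + π / q := by
  simp only [angle]; push_cast; ring

theorem lamq_mul_cos_angle_sub (q k : ℕ) :
    lamq q * cos (angle q (k + 1)) - cos (angle q (k + 2)) = cos (angle q k) := by
  rw [angle_succ, angle_succ q (k + 1), angle_succ, lamq]
  simp only [cos_add, sin_add]
  linear_combination cos (angle q k) * sin_sq_add_cos_sq (π / q)

theorem lamq_mul_sin_angle_sub (q k : ℕ) :
    lamq q * sin (angle q (k + 1)) - sin (angle q (k + 2)) = sin (angle q k) := by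
  rw [angle_succ, angle_succ q (k + 1), angle_succ, lamq]
  simp only [cos_add, sin_add]
  linear_combination sin (angle q k) * sin_sq_add_cos_sq (π / q)

theorem angle_nonneg (q k : ℕ) : 0 ≤ angle q k := by unfold angle; positivity

theorem angle_pos {q k : ℕ} (hq : 0 < q) (hk : 0 < k) : 0 < angle q k := by
  unfold angle; positivity

theorem angle_lt_mul_pi {q k : ℕ} (hq : 0 < q) {c : ℝ} (h : (k : ℝ) < c * q) :
    angle q k < c * π := by
  rw [angle, ← mul_div_assoc, div_lt_iff₀ (by positivity)]
  nlinarith [pi_pos]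

theorem angle_le_mul_pi {q k : ℕ} (hq : 0 < q) {c : ℝ} (h : (k : ℝ) ≤ c * q) :
    angle q k ≤ c * π := by
  rw [angle, ← mul_div_assoc, div_le_iff₀ (by positivity)]
  nlinarith [pi_pos]

theorem cos_angle_pos {q k : ℕ} (hk : 2 * k < q) : 0 < cos (angle q k) := by
  have hk' : (2 * k : ℝ) < q := by exact_mod_cast hk
  have := angle_lt_mul_pi (q := q) (k := k) (c := 1 / 2) (by omega) (by linarith)
  exact cos_pos_of_mem_Ioo ⟨by linarith [angle_nonneg q k, pi_pos], by linarith⟩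

theorem cos_angle_nonneg {q k : ℕ} (hq : 0 < q) (hk : 2 * k ≤ q) : 0 ≤ cos (angle q k) := by
  have hk' : (2 * k : ℝ) ≤ q := by exact_mod_cast hk
  have := angle_le_mul_pi (k := k) (c := 1 / 2) hq (by linarith)
  exact cos_nonneg_of_mem_Icc ⟨by linarith [angle_nonneg q k, pi_pos], by linarith⟩

theorem sin_angle_pos {q k : ℕ} (hk₀ : 0 < k) (hk : k < q) : 0 < sin (angle q k) :=
  sin_pos_of_pos_of_lt_pi (angle_pos (by omega) hk₀)
    (by simpa using angle_lt_mul_pi (c := 1) (by omega) (by simpa using hk))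

theorem sin_angle_nonneg {q k : ℕ} (hq : 0 < q) (hk : k ≤ q) : 0 ≤ sin (angle q k) :=
  sin_nonneg_of_nonneg_of_le_pi (angle_nonneg q k)
    (by simpa using angle_le_mul_pi (c := 1) hq (by simpa using hk))

theorem one_le_lamq {q : ℕ} (hq : 3 ≤ q) : 1 ≤ lamq q := by
  have hθ : cos (π / 3) ≤ cos (π / q) := by
    apply cos_le_cos_of_nonneg_of_le_pi (by positivity) (by linarith [pi_pos])
    exact div_le_div_of_nonneg_left pi_pos.le (by norm_num) (by exact_mod_cast hq)
  rw [cos_pi_div_three] at hθ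
  rw [lamq]; linarith

theorem lamq_pos {q : ℕ} (hq : 3 ≤ q) : 0 < lamq q := by linarith [one_le_lamq hq]

theorem two_mul_hQ_add_two_le {q : ℕ} (hq : 3 ≤ q) : 2 * hQ q + 2 ≤ q := by
  unfold hQ; split_ifs <;> omega

theorem eq_two_mul_hQ_add_three {q : ℕ} (hq : 3 ≤ q) (ho : ¬Even q) : q = 2 * hQ q + 3 := by
  rw [Nat.not_even_iff_odd] at ho
  obtain ⟨m, rfl⟩ := ho
  simp only [hQ, Nat.not_even_bit1, if_false]
  omega

theorem angle_add_two_hQ {q : ℕ} (hq : 3 ≤ q) (ho : ¬Even q) :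
    angle q (hQ q + 2) = π - angle q (hQ q + 1) := by
  have hq' : (q : ℝ) = 2 * hQ q + 3 := by exact_mod_cast eq_two_mul_hQ_add_three hq ho
  have : (q : ℝ) ≠ 0 := by positivity
  simp only [angle]
  field_simp
  rw [hq']; push_cast; ring

noncomputable def cosRatio (q j : ℕ) : ℝ := cos (angle q (j + 1)) / cos (angle q j)

noncomputable def sinRatio (q k : ℕ) : ℝ := sin (angle q k) / sin (angle q (k + 1))

theorem cosRatio_zero (q : ℕ) : cosRatio q 0 = lamq q / 2 := by
  simp [cosRatio, angle, lamq]

theorem cosRatio_nonneg {q j : ℕ} (hq : 0 < q) (hj : 2 * j + 2 ≤ q) : 0 ≤ cosRatio q j :=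
  div_nonneg (cos_angle_nonneg hq (by omega)) (cos_angle_pos (by omega)).le

theorem cosRatio_pos {q j : ℕ} (hj : 2 * j + 2 < q) : 0 < cosRatio q j :=
  div_pos (cos_angle_pos (by omega)) (cos_angle_pos (by omega))

theorem inv_cosRatio {q j : ℕ} (hj : 2 * j + 2 < q) :
    (cosRatio q j)⁻¹ = lamq q - cosRatio q (j + 1) := by
  have h := lamq_mul_cos_angle_sub q j
  have := (cos_angle_pos (q := q) (k := j + 1) (by omega)).ne'
  rw [cosRatio, cosRatio, inv_div]
  field_simp
  linarith

theorem sinRatio_nonneg {q k : ℕ} (hk : k + 1 < q) : 0 ≤ sinRatio q k :=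
  div_nonneg (sin_angle_nonneg (by omega) (by omega)) (sin_angle_pos (by omega) hk).le

theorem sinRatio_pos {q k : ℕ} (hk₀ : 0 < k) (hk : k + 1 < q) : 0 < sinRatio q k :=
  div_pos (sin_angle_pos hk₀ (by omega)) (sin_angle_pos (by omega) hk)

theorem inv_sinRatio {q k : ℕ} (hk : k + 2 < q) :
    (sinRatio q (k + 1))⁻¹ = lamq q - sinRatio q k := by
  have h := lamq_mul_sin_angle_sub q k
  have := (sin_angle_pos (q := q) (k := k + 1) (by omega) (by omega)).ne'
  rw [sinRatio, sinRatio, inv_div]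
  field_simp
  linarith

theorem inv_cosRatio_hQ {q : ℕ} (hq : 3 ≤ q) (ho : ¬Even q) :
    (cosRatio q (hQ q))⁻¹ = 1 + lamq q := by
  have hq' := eq_two_mul_hQ_add_three hq ho
  have h := lamq_mul_cos_angle_sub q (hQ q)
  rw [angle_add_two_hQ hq ho, cos_pi_sub] at h
  have := (cos_angle_pos (q := q) (k := hQ q + 1) (by omega)).ne'
  rw [cosRatio, inv_div]
  field_simp
  linarith

theorem sinRatio_hQ {q : ℕ} (hq : 3 ≤ q) (ho : ¬Even q) : sinRatio q (hQ q) = lamq q - 1 := by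
  have hq' := eq_two_mul_hQ_add_three hq ho
  have h := lamq_mul_sin_angle_sub q (hQ q)
  rw [angle_add_two_hQ hq ho, sin_pi_sub] at h
  have := (sin_angle_pos (q := q) (k := hQ q + 1) (by omega) (by omega)).ne'
  rw [sinRatio]
  field_simp
  linarith

end Angles

section Regularity

variable {q : ℕ}

theorem regularList_of_infix {L B : List ℤ} (h : RegularList q L) (hB : B <:+: L) :
    RegularList q B :=
  fun C hC => h C (hC.trans hB)

theorem not_regularList_append_of_isForbidden {B L : List ℤ} (hB : IsForbidden q B) :
    ¬RegularList q (B ++ L) :=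
  fun h => h B (prefix_append B L).isInfix hB

theorem isForbidden_replicate_one : IsForbidden q (replicate (hQ q + 1) 1) :=
  ⟨1, Or.inl rfl, Or.inl rfl⟩

theorem isForbidden_even (he : Even q) {z : ℤ} (hz : 1 ≤ z) :
    IsForbidden q (replicate (hQ q) 1 ++ [z]) :=
  ⟨1, Or.inl rfl, Or.inr (by rw [if_pos he]; exact ⟨z, hz, by simp⟩)⟩

theorem isForbidden_odd (ho : ¬Even q) {z : ℤ} (hz : 1 ≤ z) :
    IsForbidden q (replicate (hQ q) 1 ++ 2 :: (replicate (hQ q) 1 ++ [z])) :=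
  ⟨1, Or.inl rfl, Or.inr (by rw [if_neg ho]; exact ⟨z, hz, by simp⟩)⟩

theorem IsForbidden.map_neg {B : List ℤ} (h : IsForbidden q B) :
    IsForbidden q (B.map (-·)) := by
  obtain ⟨ε, hε, hB | hB⟩ := h
  · exact ⟨-ε, by omega, Or.inl (by simp [hB])⟩
  · refine ⟨-ε, by omega, Or.inr ?_⟩
    split_ifs at hB ⊢ <;> obtain ⟨m, hm, rfl⟩ := hB <;> exact ⟨m, hm, by simp⟩

theorem regularList_map_neg {L : List ℤ} (h : RegularList q L) :
    RegularList q (L.map (-·)) := by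
  intro B hB hforb
  refine h _ ?_ (IsForbidden.map_neg hforb)
  simpa using hB.map (-·)

theorem regularSeq_shift {a : ℕ → ℤ} (h : RegularSeq q a) : RegularSeq q (fun i => a (i + 1)) :=
  fun l len => by simpa only [Nat.add_right_comm l] using h (l + 1) len

theorem regularList_ofFn_of_regularSeq {a : ℕ → ℤ} (h : RegularSeq q a) (n : ℕ) :
    RegularList q (ofFn fun j : Fin n => a j) := by
  intro B hB
  obtain ⟨k, -, hk⟩ := infix_iff_getElem?.mp hB
  have hwin : B = ofFn fun j : Fin B.length => a (k + j) := by
    refine ext_getElem (by simp) fun i hi _ => ?_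
    have := hk i hi
    rw [List.getElem?_ofFn] at this
    split_ifs at this
    simp_all [Nat.add_comm k]
  rw [hwin]
  exact h k B.length

end Regularity

section ContextBounds

variable {q : ℕ}

theorem replicate_append_cons_self {α : Type*} (n : ℕ) (a : α) (L : List α) :
    replicate n a ++ a :: L = replicate (n + 1) a ++ L := by
  simp [replicate_succ']

theorem int_mul_add_ne_zero {lam v : ℝ} (hlam : 0 < lam) {a : ℤ} (ha : a ≠ 0)
    (hv : |v| ≤ lam / 2) : a * lam + v ≠ 0 := by
  obtain ⟨hv₁, hv₂⟩ := abs_le.mp hv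
  rcases lt_or_gt_of_ne ha with ha | ha
  · have : (a : ℝ) ≤ -1 := by exact_mod_cast (by omega : a ≤ -1)
    apply ne_of_lt; nlinarith
  · have : (1 : ℝ) ≤ a := by exact_mod_cast (by omega : 1 ≤ a)
    apply ne_of_gt; nlinarith

/-- The strengthened induction hypothesis: lower bounds for `[0; L]` depending on the regular
context in front of `L`. -/
structure ContextBounds (q : ℕ) (L : List ℤ) : Prop where
  den_ne_zero : cfDenList (lamq q) 0 L ≠ 0
  after_ones : ∀ j ≤ hQ q, RegularList q (replicate j 1 ++ L) →
    -cosRatio q j ≤ cfValList (lamq q) 0 L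
  after_two : ∀ k ≤ hQ q,
    RegularList q (replicate (hQ q) 1 ++ 2 :: (replicate (hQ q - k) 1 ++ L)) →
    -sinRatio q k ≤ cfValList (lamq q) 0 L

theorem contextBounds_nil (hq : 3 ≤ q) : ContextBounds q [] := by
  have := two_mul_hQ_add_two_le hq
  refine ⟨by simp, fun j hj _ => ?_, fun k hk _ => ?_⟩
  · simpa using cosRatio_nonneg (q := q) (j := j) (by omega) (by omega)
  · simpa using sinRatio_nonneg (q := q) (k := k) (by omega)

theorem ContextBounds.abs_cfValList_le {L : List ℤ} (h : ContextBounds q L)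
    (hneg : ContextBounds q (L.map (-·))) (hreg : RegularList q L) :
    |cfValList (lamq q) 0 L| ≤ lamq q / 2 := by
  have hlo := h.after_ones 0 (Nat.zero_le _) (by simpa using hreg)
  have hhi := hneg.after_ones 0 (Nat.zero_le _) (by simpa using regularList_map_neg hreg)
  rw [cosRatio_zero] at hlo hhi
  rw [cfValList_map_neg] at hhi
  exact abs_le.mpr ⟨hlo, by linarith⟩

/-- For `a ≥ 1` the bound `-β ≤ -1 / (aλ + v)` amounts to `β⁻¹ ≤ aλ + v`; for `a ≤ -1` it is
automatic, since then `[0; a, M] > 0`. -/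
theorem neg_le_cfValList_cons (hq : 3 ≤ q) {a : ℤ} {M : List ℤ} (ha : a ≠ 0)
    (hM : cfDenList (lamq q) 0 M ≠ 0) (hMabs : |cfValList (lamq q) 0 M| ≤ lamq q / 2)
    {β : ℝ} (hβ : 0 ≤ β) (hpos : 1 ≤ a → 0 < β ∧ β⁻¹ ≤ a * lamq q + cfValList (lamq q) 0 M) :
    -β ≤ cfValList (lamq q) 0 (a :: M) := by
  rw [cfValList_cons a hM]
  rcases lt_or_gt_of_ne ha with ha | ha
  · have : (a : ℝ) ≤ -1 := by exact_mod_cast (by omega : a ≤ -1)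
    have hd : a * lamq q + cfValList (lamq q) 0 M < 0 := by
      nlinarith [(abs_le.mp hMabs).2, lamq_pos hq]
    linarith [div_pos_of_neg_of_neg (by norm_num : (-1 : ℝ) < 0) hd]
  · obtain ⟨hβ₀, hle⟩ := hpos ha
    have := inv_anti₀ (inv_pos.mpr hβ₀) hle
    rw [inv_inv] at this
    rw [neg_div, one_div]
    linarith

theorem ContextBounds.after_ones_cons (hq : 3 ≤ q) {a : ℤ} {M : List ℤ} (ha : a ≠ 0)
    (hM : ContextBounds q M) (hMabs : |cfValList (lamq q) 0 M| ≤ lamq q / 2) :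
    ∀ j ≤ hQ q, RegularList q (replicate j 1 ++ a :: M) →
      -cosRatio q j ≤ cfValList (lamq q) 0 (a :: M) := by
  intro j hj hctx
  have hh := two_mul_hQ_add_two_le hq
  have hlam := one_le_lamq hq
  have hlo := (abs_le.mp hMabs).1
  refine neg_le_cfValList_cons hq ha hM.den_ne_zero hMabs
    (cosRatio_nonneg (by omega) (by omega)) fun ha₁ => ?_
  rcases ha₁.eq_or_lt with rfl | ha₂
  · rw [replicate_append_cons_self] at hctx
    have hj' : j < hQ q := by
      refine hj.lt_of_ne fun hjh => ?_
      subst hjh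
      exact not_regularList_append_of_isForbidden isForbidden_replicate_one hctx
    have := hM.after_ones (j + 1) hj' hctx
    refine ⟨cosRatio_pos (by omega), ?_⟩
    rw [inv_cosRatio (by omega)]
    push_cast; linarith
  · have ha₂' : (2 : ℝ) ≤ a := by exact_mod_cast ha₂
    rcases hj.lt_or_eq with hj' | rfl
    · have := cosRatio_nonneg (q := q) (j := j + 1) (by omega) (by omega)
      refine ⟨cosRatio_pos (by omega), ?_⟩
      rw [inv_cosRatio (by omega)]
      nlinarith
    by_cases he : Even q
    · exact (not_regularList_append_of_isForbidden (L := M) (isForbidden_even he ha₁)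
        (by simpa using hctx)).elim
    rw [inv_cosRatio_hQ hq he]
    refine ⟨inv_pos.mp (by rw [inv_cosRatio_hQ hq he]; linarith), ?_⟩
    rcases (by omega : a = 2 ∨ 3 ≤ a) with rfl | ha₃
    -- the context `1^{h_q}, 2` in front of `M` is the `after_two` context with `k = h_q`
    · have := hM.after_two (hQ q) le_rfl (by simpa using hctx)
      rw [sinRatio_hQ hq he] at this
      push_cast; linarith
    · have : (3 : ℝ) ≤ a := by exact_mod_cast ha₃
      nlinarith

theorem ContextBounds.after_two_cons (hq : 3 ≤ q) {a : ℤ} {M : List ℤ} (ha : a ≠ 0)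
    (hM : ContextBounds q M) (hMabs : |cfValList (lamq q) 0 M| ≤ lamq q / 2) :
    ∀ k ≤ hQ q, RegularList q (replicate (hQ q) 1 ++ 2 :: (replicate (hQ q - k) 1 ++ a :: M)) →
      -sinRatio q k ≤ cfValList (lamq q) 0 (a :: M) := by
  intro k hk hctx
  have hh := two_mul_hQ_add_two_le hq
  have hlo := (abs_le.mp hMabs).1
  refine neg_le_cfValList_cons hq ha hM.den_ne_zero hMabs (sinRatio_nonneg (by omega))
    fun ha₁ => ?_
  by_cases he : Even q
  · exact (not_regularList_append_of_isForbidden (isForbidden_even he (z := 2) (by norm_num))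
      (by simpa using hctx)).elim
  obtain _ | k := k
  · exact (not_regularList_append_of_isForbidden (L := M) (isForbidden_odd he ha₁)
      (by simpa using hctx)).elim
  refine ⟨sinRatio_pos (by omega) (by omega), ?_⟩
  rw [inv_sinRatio (by omega)]
  rcases ha₁.eq_or_lt with rfl | ha₂
  · rw [replicate_append_cons_self, show hQ q - (k + 1) + 1 = hQ q - k by omega] at hctx
    have := hM.after_two k (by omega) hctx
    push_cast; linarith
  · have : (2 : ℝ) ≤ a := by exact_mod_cast ha₂
    nlinarith [sinRatio_nonneg (q := q) (k := k) (by omega), one_le_lamq hq]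

theorem ContextBounds.cons (hq : 3 ≤ q) {a : ℤ} {M : List ℤ} (ha : a ≠ 0)
    (hreg : RegularList q (a :: M)) (hM : ContextBounds q M)
    (hneg : ContextBounds q (M.map (-·))) : ContextBounds q (a :: M) := by
  have hMabs := hM.abs_cfValList_le hneg (regularList_of_infix hreg (suffix_cons a M).isInfix)
  refine ⟨?_, hM.after_ones_cons hq ha hMabs, hM.after_two_cons hq ha hMabs⟩
  rw [cfDenList_cons_of_ne_zero a hM.den_ne_zero]
  exact mul_ne_zero (int_mul_add_ne_zero (lamq_pos hq) ha hMabs) hM.den_ne_zero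

theorem contextBounds_of_regular (hq : 3 ≤ q) {L : List ℤ} (hnz : ∀ z ∈ L, z ≠ 0)
    (hreg : RegularList q L) : ContextBounds q L ∧ ContextBounds q (L.map (-·)) := by
  induction L with
  | nil => exact ⟨contextBounds_nil hq, contextBounds_nil hq⟩
  | cons a M ih =>
    have ha : a ≠ 0 := hnz a mem_cons_self
    obtain ⟨hM, hneg⟩ := ih (fun z hz => hnz z (mem_cons_of_mem a hz))
      (regularList_of_infix hreg (suffix_cons a M).isInfix)
    refine ⟨hM.cons hq ha hreg hneg, ?_⟩
    rw [map_cons]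
    exact hneg.cons hq (neg_ne_zero.mpr ha) (by simpa using regularList_map_neg hreg)
      (by simpa using hM)

theorem cfDenList_ne_zero_of_regular (hq : 3 ≤ q) {L : List ℤ} (hnz : ∀ z ∈ L, z ≠ 0)
    (hreg : RegularList q L) : cfDenList (lamq q) 0 L ≠ 0 :=
  (contextBounds_of_regular hq hnz hreg).1.den_ne_zero

theorem abs_cfValList_le_of_regular (hq : 3 ≤ q) {L : List ℤ} (hnz : ∀ z ∈ L, z ≠ 0)
    (hreg : RegularList q L) : |cfValList (lamq q) 0 L| ≤ lamq q / 2 :=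
  let h := contextBounds_of_regular hq hnz hreg
  h.1.abs_cfValList_le h.2 hreg

end ContextBounds

section InfiniteCF

variable {q : ℕ} {lam : ℝ}

theorem cfP_cfQ_eq_ofFn (f : ℕ → ℤ) (n : ℕ) :
    cfP lam (fun k => if k = 0 then 0 else f (k - 1)) n =
        cfNumList lam (ofFn fun j : Fin n => f j) ∧
      cfQ lam (fun k => if k = 0 then 0 else f (k - 1)) n =
        cfDenList lam 0 (ofFn fun j : Fin n => f j) := by
  have h := cfP_cfQ_congr lam (A := fun k => if k = 0 then 0 else f (k - 1))
    (A' := fun i => ((0 : ℤ) :: ofFn fun j : Fin n => f j).getD i 0) n ?_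
  · simpa [cfNumList, cfDenList] using h
  · rintro (_ | i) hi
    · rfl
    · simp [getD_eq_getElem?_getD, show i < n by omega]

theorem seqConvTo_inr_iff {f : ℕ → ℤ} {x : ℝ} :
    SeqConvTo lam (Sum.inr f) x ↔ (∀ n, cfDenList lam 0 (ofFn fun j : Fin n => f j) ≠ 0) ∧
      Tendsto (fun n => cfValList lam 0 (ofFn fun j : Fin n => f j)) atTop (𝓝 x) := by
  simp only [SeqConvTo, CFConvergesTo, cfValList_eq_div,
    fun n => (cfP_cfQ_eq_ofFn (lam := lam) f n).1, fun n => (cfP_cfQ_eq_ofFn (lam := lam) f n).2]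

theorem forall_mem_ofFn_ne_zero {f : ℕ → ℤ} (hnz : ∀ i, f i ≠ 0) (n : ℕ) :
    ∀ z ∈ ofFn fun j : Fin n => f j, z ≠ 0 := by
  simp [mem_ofFn, hnz]

theorem ne_zero_of_tendsto_neg_one_div {d : ℕ → ℝ} {C x : ℝ} (hd : ∀ n, d n ≠ 0)
    (hC : ∀ n, |d n| ≤ C) (hx : Tendsto (fun n => -1 / d n) atTop (𝓝 x)) : x ≠ 0 := by
  have hC₀ : 0 < C := (abs_pos.mpr (hd 0)).trans_le (hC 0)
  have hbound : ∀ n, 1 / C ≤ |-1 / d n| := fun n => by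
    rw [abs_div, abs_neg, abs_one]
    exact one_div_le_one_div_of_le (abs_pos.mpr (hd n)) (hC n)
  rintro rfl
  have := ge_of_tendsto' hx.abs hbound
  rw [abs_zero] at this
  linarith [one_div_pos.mpr hC₀]

theorem tendsto_cfValList_ofFn_succ (hq : 3 ≤ q) {f : ℕ → ℤ} (hnz : ∀ i, f i ≠ 0)
    (hreg : RegularSeq q f) {x : ℝ}
    (hx : Tendsto (fun n => cfValList (lamq q) 0 (ofFn fun j : Fin n => f j)) atTop (𝓝 x)) :
    x ≠ 0 ∧ Tendsto (fun n => cfValList (lamq q) 0 (ofFn fun j : Fin n => f (j + 1))) atTop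
      (𝓝 (-1 / x - f 0 * lamq q)) := by
  set W := fun n => cfValList (lamq q) 0 (ofFn fun j : Fin n => f (j + 1))
  have hnzW n := forall_mem_ofFn_ne_zero (fun i => hnz (i + 1)) n
  have hregW n := regularList_ofFn_of_regularSeq (regularSeq_shift hreg) n
  have hW : ∀ n, |W n| ≤ lamq q / 2 := fun n => abs_cfValList_le_of_regular hq (hnzW n) (hregW n)
  have hden : ∀ n, f 0 * lamq q + W n ≠ 0 := fun n =>
    int_mul_add_ne_zero (lamq_pos hq) (hnz 0) (hW n)
  have hx' : Tendsto (fun n => -1 / (f 0 * lamq q + W n)) atTop (𝓝 x) := by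
    refine ((tendsto_add_atTop_iff_nat 1).mpr hx).congr fun n => ?_
    rw [ofFn_succ]
    exact cfValList_cons _ (cfDenList_ne_zero_of_regular hq (hnzW n) (hregW n))
  have hx0 : x ≠ 0 := by
    refine ne_zero_of_tendsto_neg_one_div (C := |(f 0 : ℝ)| * lamq q + lamq q / 2) hden
      (fun n => ?_) hx'
    calc |f 0 * lamq q + W n| ≤ |(f 0 : ℝ) * lamq q| + |W n| := abs_add_le _ _
      _ ≤ |(f 0 : ℝ)| * lamq q + lamq q / 2 := by
        rw [abs_mul, abs_of_pos (lamq_pos hq)]; linarith [hW n]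
  refine ⟨hx0, (((tendsto_const_nhds (x := (-1 : ℝ))).div hx' hx0).sub_const _).congr
    fun n => ?_⟩
  simp only [Pi.div_apply]
  field_simp [hden n]
  ring

end InfiniteCF

section Uniqueness

variable {α : Type*}

def seqHead : List α ⊕ (ℕ → α) → Option α := Sum.elim List.head? fun f => some (f 0)

def seqTail : List α ⊕ (ℕ → α) → List α ⊕ (ℕ → α) := Sum.map List.tail fun f i => f (i + 1)

theorem seqHead_iterate_seqTail_inl (L : List α) (k : ℕ) :
    seqHead (seqTail^[k] (Sum.inl L)) = L[k]? := by
  have : seqTail^[k] (Sum.inl L) = Sum.inl (L.drop k) := by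
    induction k with
    | zero => simp
    | succ k ih => rw [Function.iterate_succ_apply', ih]; simp [seqTail, tail_drop]
  simp [this, seqHead, head?_drop]

theorem seqHead_iterate_seqTail_inr (f : ℕ → α) (k : ℕ) :
    seqHead (seqTail^[k] (Sum.inr f)) = some (f k) := by
  have : seqTail^[k] (Sum.inr f) = Sum.inr fun i => f (i + k) := by
    induction k with
    | zero => simp
    | succ k ih =>
      rw [Function.iterate_succ_apply', ih]
      simp [seqTail, Nat.add_assoc, Nat.add_comm 1 k]
  simp [this, seqHead]

theorem eq_of_seqHead_iterate_seqTail {s t : List α ⊕ (ℕ → α)}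
    (h : ∀ k, seqHead (seqTail^[k] s) = seqHead (seqTail^[k] t)) : s = t := by
  rcases s with L | f <;> rcases t with L' | f' <;>
    simp only [seqHead_iterate_seqTail_inl, seqHead_iterate_seqTail_inr] at h
  · exact congrArg _ (ext_getElem? h)
  · simpa using h L.length
  · simpa using h L'.length
  · exact congrArg _ (funext fun k => Option.some.inj (h k))

end Uniqueness

section RegularCF

variable {q : ℕ}

theorem abs_sub_nearestLam_mul_le {lam : ℝ} (hlam : 0 < lam) (w : ℝ) :
    |w - nearestLam lam w * lam| ≤ lam / 2 := by
  have h : w - nearestLam lam w * lam = lam * ((w / lam + 1 / 2) - nearestLam lam w) - lam / 2 := by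
    field_simp; ring
  have hfloor : 0 ≤ (w / lam + 1 / 2) - floorstar (w / lam + 1 / 2) ∧
      (w / lam + 1 / 2) - floorstar (w / lam + 1 / 2) ≤ 1 := by
    unfold floorstar
    split_ifs
    · push_cast
      exact ⟨by linarith [Int.ceil_lt_add_one (w / lam + 1 / 2)],
        by linarith [Int.le_ceil (w / lam + 1 / 2)]⟩
    · exact ⟨by linarith [Int.floor_le (w / lam + 1 / 2)],
        by linarith [Int.lt_floor_add_one (w / lam + 1 / 2)]⟩
  rw [h, nearestLam]
  exact abs_le.mpr ⟨by nlinarith, by nlinarith⟩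

theorem nearestLam_eq_of_abs_sub_le {lam w : ℝ} (hlam : 0 < lam) {a : ℤ}
    (ha : |w - a * lam| ≤ lam / 2) (h₁ : w - nearestLam lam w * lam ≠ lam / 2)
    (h₂ : w - nearestLam lam w * lam ≠ -(lam / 2)) : nearestLam lam w = a := by
  obtain ⟨hn₁, hn₂⟩ := abs_le.mp (abs_sub_nearestLam_mul_le hlam w)
  obtain ⟨ha₁, ha₂⟩ := abs_le.mp ha
  have hlt : ((nearestLam lam w - a : ℤ) : ℝ) * lam < 1 * lam := by
    push_cast; rw [sub_mul]; linarith [lt_of_le_of_ne' hn₁ h₂]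
  have hgt : (-1 : ℝ) * lam < ((nearestLam lam w - a : ℤ) : ℝ) * lam := by
    push_cast; rw [sub_mul]; linarith [lt_of_le_of_ne hn₂ h₁]
  have h₃ : nearestLam lam w - a < 1 := by exact_mod_cast lt_of_mul_lt_mul_right hlt hlam.le
  have h₄ : -1 < nearestLam lam w - a := by exact_mod_cast lt_of_mul_lt_mul_right hgt hlam.le
  omega

def IsRegularCF (q : ℕ) (u : List ℤ ⊕ (ℕ → ℤ)) (y : ℝ) : Prop :=
  SeqRegular q u ∧ SeqConvTo (lamq q) u y

/-- The digit `⟨-1/y⟩` produced by `f_q` at `y`; `none` encodes that the expansion of `0` is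
empty. -/
noncomputable def firstDigit (lam y : ℝ) : Option ℤ :=
  if y = 0 then none else some (nearestLam lam (-1 / y))

theorem IsRegularCF.abs_le (hq : 3 ≤ q) {u : List ℤ ⊕ (ℕ → ℤ)} {y : ℝ} (hu : IsRegularCF q u y) :
    |y| ≤ lamq q / 2 := by
  obtain ⟨hreg, hconv⟩ := hu
  rcases u with L | f
  · rw [← hconv.2]
    exact abs_cfValList_le_of_regular hq hreg.1 hreg.2
  · exact le_of_tendsto' (seqConvTo_inr_iff.mp hconv).2.abs fun n =>
      abs_cfValList_le_of_regular hq (forall_mem_ofFn_ne_zero hreg.1 n)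
        (regularList_ofFn_of_regularSeq hreg.2 n)

theorem IsRegularCF.seqTail_of_seqHead_eq (hq : 3 ≤ q) {u : List ℤ ⊕ (ℕ → ℤ)} {y : ℝ}
    (hu : IsRegularCF q u y) {a : ℤ} (ha : seqHead u = some a) :
    y ≠ 0 ∧ IsRegularCF q (seqTail u) (-1 / y - a * lamq q) := by
  obtain ⟨hreg, hconv⟩ := hu
  rcases u with (_ | ⟨b, M⟩) | f
  · simp [seqHead] at ha
  · obtain rfl : a = b := by simpa [seqHead, eq_comm] using ha
    obtain ⟨hnz, hregL⟩ := hreg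
    have hnzM : ∀ z ∈ M, z ≠ 0 := fun z hz => hnz z (mem_cons_of_mem a hz)
    have hregM := regularList_of_infix hregL (suffix_cons a M).isInfix
    have hKM := cfDenList_ne_zero_of_regular hq hnzM hregM
    have hd := int_mul_add_ne_zero (lamq_pos hq) (hnz a mem_cons_self)
      (abs_cfValList_le_of_regular hq hnzM hregM)
    have hy : y = -1 / (a * lamq q + cfValList (lamq q) 0 M) := by
      rw [← hconv.2, cfValList_cons a hKM]
    refine ⟨by rw [hy]; exact div_ne_zero (by norm_num) hd, ⟨hnzM, hregM⟩, hKM, ?_⟩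
    rw [tail_cons, hy]
    field_simp
    ring
  · obtain rfl : f 0 = a := by simpa [seqHead] using ha
    obtain ⟨hnz, hregS⟩ := hreg
    obtain ⟨hy, htail⟩ := tendsto_cfValList_ofFn_succ hq hnz hregS (seqConvTo_inr_iff.mp hconv).2
    refine ⟨hy, ⟨fun i => hnz (i + 1), regularSeq_shift hregS⟩, seqConvTo_inr_iff.mpr ⟨?_, htail⟩⟩
    exact fun n => cfDenList_ne_zero_of_regular hq
      (forall_mem_ofFn_ne_zero (fun i => hnz (i + 1)) n)
      (regularList_ofFn_of_regularSeq (regularSeq_shift hregS) n)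

theorem IsRegularCF.seqHead_eq_and_seqTail (hq : 3 ≤ q) {u : List ℤ ⊕ (ℕ → ℤ)} {y : ℝ}
    (hu : IsRegularCF q u y) (h₁ : fq (lamq q) y ≠ lamq q / 2)
    (h₂ : fq (lamq q) y ≠ -(lamq q) / 2) :
    seqHead u = firstDigit (lamq q) y ∧ IsRegularCF q (seqTail u) (fq (lamq q) y) := by
  rcases hhead : seqHead u with _ | a
  · obtain (_ | ⟨b, M⟩) | f := u <;> simp only [seqHead, Sum.elim_inl, Sum.elim_inr,
      head?_cons, head?_nil, reduceCtorEq] at hhead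
    obtain rfl : y = 0 := by rw [← hu.2.2]; exact cfValList_nil _
    simpa [firstDigit, seqTail, fq] using hu
  obtain ⟨hy, htail⟩ := hu.seqTail_of_seqHead_eq hq hhead
  have hfq : fq (lamq q) y = -1 / y - nearestLam (lamq q) (-1 / y) * lamq q := by
    rw [fq, if_neg hy]
  have hdigit : nearestLam (lamq q) (-1 / y) = a :=
    nearestLam_eq_of_abs_sub_le (lamq_pos hq) (htail.abs_le hq) (hfq ▸ h₁)
      (by rw [← hfq]; rwa [neg_div] at h₂)
  rw [hfq, hdigit]
  exact ⟨by simp [firstDigit, hy, hdigit], htail⟩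

theorem IsRegularCF.seqHead_iterate_seqTail (hq : 3 ≤ q) {u : List ℤ ⊕ (ℕ → ℤ)} {x : ℝ}
    (hu : IsRegularCF q u x)
    (horb : ∀ n : ℕ, (fq (lamq q))^[n] x ≠ lamq q / 2 ∧ (fq (lamq q))^[n] x ≠ -(lamq q) / 2)
    (k : ℕ) : seqHead (seqTail^[k] u) = firstDigit (lamq q) ((fq (lamq q))^[k] x) := by
  have horb' : ∀ k, fq (lamq q) ((fq (lamq q))^[k] x) ≠ lamq q / 2 ∧
      fq (lamq q) ((fq (lamq q))^[k] x) ≠ -(lamq q) / 2 := fun k => by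
    simpa only [Function.iterate_succ_apply'] using horb (k + 1)
  have hiter : ∀ k, IsRegularCF q (seqTail^[k] u) ((fq (lamq q))^[k] x) := by
    intro k
    induction k with
    | zero => exact hu
    | succ k ih =>
      rw [Function.iterate_succ_apply', Function.iterate_succ_apply']
      exact (ih.seqHead_eq_and_seqTail hq (horb' k).1 (horb' k).2).2
  exact ((hiter k).seqHead_eq_and_seqTail hq (horb' k).1 (horb' k).2).1

end RegularCF

end RosenCF

theorem stmt11_general (q : ℕ) (hq : 3 ≤ q) (x : ℝ)
    (horb : ∀ n : ℕ, (fq (lamq q))^[n] x ≠ lamq q / 2 ∧ (fq (lamq q))^[n] x ≠ -(lamq q) / 2)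
    (s t : List ℤ ⊕ (ℕ → ℤ))
    (hs : SeqRegular q s) (ht : SeqRegular q t)
    (hsx : SeqConvTo (lamq q) s x) (htx : SeqConvTo (lamq q) t x) :
    s = t :=
  RosenCF.eq_of_seqHead_iterate_seqTail fun k => by
    rw [RosenCF.IsRegularCF.seqHead_iterate_seqTail hq ⟨hs, hsx⟩ horb,
      RosenCF.IsRegularCF.seqHead_iterate_seqTail hq ⟨ht, htx⟩ horb]

/-- Uniqueness of regular `λ_q`-CF's: if the `f_q`-orbit of `x ∈ I_q` never hits `±λ_q/2`,
then any two (finite or infinite) `q`-regular digit sequences whose continued fraction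
`[0; a₁, a₂, …]` equals `x` coincide. -/
theorem stmt11 (q : ℕ) (hq : 3 ≤ q) (x : ℝ)
    (hx : x ∈ Set.Icc (-(lamq q) / 2) (lamq q / 2))
    (horb : ∀ n : ℕ, (fq (lamq q))^[n] x ≠ lamq q / 2 ∧ (fq (lamq q))^[n] x ≠ -(lamq q) / 2)
    (s t : List ℤ ⊕ (ℕ → ℤ))
    (hs : SeqRegular q s) (ht : SeqRegular q t)
    (hsx : SeqConvTo (lamq q) s x) (htx : SeqConvTo (lamq q) t x) :
    s = t :=
  stmt11_general q hq x horb s t hs ht hsx htx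
end

section
/- Let D_+ = {z ∈ ℂ : |z + 1/4| < 3/4} and D_− = {z ∈ ℂ : |z − 1/4| < 3/4}. Then for every integer n: (i) if n ≥ 3 and |z + 1/4| ≤ 3/4 then z + n ≠ 0 and −1/(z+n) ∈ D_+; (ii) if n ≤ −2 and |z + 1/4| ≤ 3/4 then z + n ≠ 0 and −1/(z+n) ∈ D_−; (iii) if n ≥ 2 and |z − 1/4| ≤ 3/4 then z + n ≠ 0 and −1/(z+n) ∈ D_+; (iv) if n ≤ −3 and |z − 1/4| ≤ 3/4 then z + n ≠ 0 and −1/(z+n) ∈ D_−. -/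
open Filter Topology

/-! The map `w ↦ -1/w` sends the exterior of the disc `|w + 1/2| ≤ 3/2` (the circle through
`-2` and `1`) into `D_+ = {|ζ + 1/4| < 3/4}`, because
`9|w|² - |w - 4|² = 8 (|w + 1/2|² - 9/4)`. A translate `z + n` of a closed disc of radius `3/4`
centred at `a` lies in that exterior as soon as `n + a > 7/4`, by the triangle inequality.
Cases (ii) and (iv) are the images of (iii) and (i) under `z ↦ -z`, which exchanges `D_+`
and `D_-`. -/

lemma norm_neg_one_div_add_quarter_lt {w : ℂ} (hw : 3 / 2 < ‖w + 1 / 2‖) :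
    ‖-1 / w + 1 / 4‖ < 3 / 4 := by
  have hw0 : w ≠ 0 := by rintro rfl; norm_num at hw
  have hid : (3 * ‖w‖) ^ 2 - ‖w - 4‖ ^ 2 = 8 * (‖w + 1 / 2‖ ^ 2 - (3 / 2) ^ 2) := by
    simp only [mul_pow, Complex.sq_norm, Complex.normSq_apply, Complex.sub_re, Complex.sub_im,
      Complex.add_re, Complex.add_im, Complex.div_ofNat_re, Complex.div_ofNat_im,
      Complex.one_re, Complex.one_im, Complex.re_ofNat, Complex.im_ofNat]
    ring
  have key : ‖w - 4‖ < 3 * ‖w‖ := by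
    refine lt_of_pow_lt_pow_left₀ 2 (by positivity) ?_
    nlinarith [pow_lt_pow_left₀ hw (by norm_num) two_ne_zero]
  rw [show -1 / w + 1 / 4 = (w - 4) / (4 * w) by field_simp; ring, norm_div, norm_mul,
    Complex.norm_ofNat, div_lt_iff₀ (mul_pos four_pos (norm_pos_iff.mpr hw0))]
  linarith

lemma three_halves_lt_norm_add_half {z : ℂ} {a : ℝ} {n : ℤ} (hz : ‖z - a‖ ≤ 3 / 4)
    (hn : 7 / 4 < n + a) : 3 / 2 < ‖z + n + 1 / 2‖ := by
  have hsplit : z + n + 1 / 2 = ((n + a + 1 / 2 : ℝ) : ℂ) + (z - a) := by push_cast; ring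
  have hpos : (0 : ℝ) ≤ n + a + 1 / 2 := by linarith
  calc 3 / 2 < (n + a + 1 / 2) - 3 / 4 := by linarith
    _ ≤ ‖((n + a + 1 / 2 : ℝ) : ℂ)‖ - ‖z - a‖ := by
        rw [Complex.norm_real, Real.norm_of_nonneg hpos]; linarith
    _ ≤ ‖z + n + 1 / 2‖ := hsplit ▸ norm_sub_le_norm_add _ _

lemma add_ne_zero_and_neg_one_div_mem_plus {z : ℂ} {a : ℝ} {n : ℤ} (hz : ‖z - a‖ ≤ 3 / 4)
    (hn : 7 / 4 < n + a) : z + n ≠ 0 ∧ ‖-1 / (z + n) + 1 / 4‖ < 3 / 4 := by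
  have h := three_halves_lt_norm_add_half hz hn
  refine ⟨?_, norm_neg_one_div_add_quarter_lt h⟩
  intro h0
  rw [h0] at h
  norm_num at h

lemma neg_one_div_mem_minus_of_neg {w : ℂ} (h : -w ≠ 0 ∧ ‖-1 / -w + 1 / 4‖ < 3 / 4) :
    w ≠ 0 ∧ ‖-1 / w - 1 / 4‖ < 3 / 4 := by
  refine ⟨neg_ne_zero.mp h.1, ?_⟩
  rw [show -1 / w - 1 / 4 = -(-1 / -w + 1 / 4) by ring, norm_neg]
  exact h.2

/-- The inverse branches `θ_n(z) = -1/(z+n)` (case `q = 3`, `λ₃ = 1`) map the closed discs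
`D_± = {|z ± 1/4| ≤ 3/4}` into the open discs, for `n` in the appropriate index sets. -/
theorem stmt17 (n : ℤ) (z : ℂ) :
    (3 ≤ n → ‖z + 1 / 4‖ ≤ 3 / 4 →
      z + (n : ℂ) ≠ 0 ∧ ‖-1 / (z + (n : ℂ)) + 1 / 4‖ < 3 / 4) ∧
    (n ≤ -2 → ‖z + 1 / 4‖ ≤ 3 / 4 →
      z + (n : ℂ) ≠ 0 ∧ ‖-1 / (z + (n : ℂ)) - 1 / 4‖ < 3 / 4) ∧
    (2 ≤ n → ‖z - 1 / 4‖ ≤ 3 / 4 →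
      z + (n : ℂ) ≠ 0 ∧ ‖-1 / (z + (n : ℂ)) + 1 / 4‖ < 3 / 4) ∧
    (n ≤ -3 → ‖z - 1 / 4‖ ≤ 3 / 4 →
      z + (n : ℂ) ≠ 0 ∧ ‖-1 / (z + (n : ℂ)) - 1 / 4‖ < 3 / 4) := by
  have hplus : ‖z + 1 / 4‖ = ‖z - ((-1 / 4 : ℝ) : ℂ)‖ := by congr 1; push_cast; ring
  have hminus : ‖z - 1 / 4‖ = ‖z - ((1 / 4 : ℝ) : ℂ)‖ := by congr 1; push_cast; ring
  have hneg_plus : ‖z + 1 / 4‖ = ‖-z - ((1 / 4 : ℝ) : ℂ)‖ := by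
    rw [← norm_neg]; congr 1; push_cast; ring
  have hneg_minus : ‖z - 1 / 4‖ = ‖-z - ((-1 / 4 : ℝ) : ℂ)‖ := by
    rw [← norm_neg]; congr 1; push_cast; ring
  have hcast : ((-n : ℤ) : ℂ) = -(n : ℂ) := Int.cast_neg n
  refine ⟨fun hn hz => ?_, fun hn hz => ?_, fun hn hz => ?_, fun hn hz => ?_⟩
  · exact add_ne_zero_and_neg_one_div_mem_plus (hplus ▸ hz) (by rify at hn; linarith)
  · have h := add_ne_zero_and_neg_one_div_mem_plus (n := -n) (hneg_plus ▸ hz)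
      (by rify at hn; push_cast; linarith)
    exact neg_one_div_mem_minus_of_neg (by rwa [hcast, ← neg_add] at h)
  · exact add_ne_zero_and_neg_one_div_mem_plus (hminus ▸ hz) (by rify at hn; linarith)
  · have h := add_ne_zero_and_neg_one_div_mem_plus (n := -n) (hneg_minus ▸ hz)
      (by rify at hn; push_cast; linarith)
    exact neg_one_div_mem_minus_of_neg (by rwa [hcast, ← neg_add] at h)
end
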